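/- arXiv:2104.09151 — 10 statements merged into one kernel-verified Lean document; each statement's English description precedes it below -/
import Mathlib

section
/- If θ is an infinite regular cardinal and λ is a cardinal with θ = cf(λ) < λ, then the meeting number m(θ,λ) is strictly greater than λ, where m(θ,λ) is the least size of a family 𝒴 of subsets of λ each of cardinality θ such that every X ⊆ λ of cardinality θ has |X ∩ Y| = θ for some Y ∈ 𝒴. -/
open Cardinal Set

noncomputable section

/-- The meeting number `m(θ,λ)`: the least size of a family `𝒴 ⊆ [λ]^θ` such that
every `X ∈ [λ]^θ` satisfies `|X ∩ Y| = θ` for some `Y ∈ 𝒴`. -/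
def meetNum (θ lam : Cardinal) : Cardinal :=
  sInf { c | ∃ 𝒴 : Set (Set lam.ord.ToType), #𝒴 = c ∧
    (∀ Y ∈ 𝒴, #Y = θ) ∧
    ∀ X : Set lam.ord.ToType, #X = θ → ∃ Y ∈ 𝒴, #(X ∩ Y : Set _) = θ }

/-- The meeting number `m(Δ,λ,θ,χ)`: the least size of a family `ℋ` of functions from `Δ`
to `[λ]^{<χ}` such that for every `X ∈ [Δ]^θ` and every `g : X → λ` there is `h ∈ ℋ`
with `|{ξ ∈ X | g ξ ∈ h ξ}| = θ`. -/
def meetNum4 (Δ lam θ χ : Cardinal) : Cardinal :=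
  sInf { c | ∃ ℋ : Set (Δ.ord.ToType → Set lam.ord.ToType), #ℋ = c ∧
    (∀ h ∈ ℋ, ∀ ξ, #(h ξ) < χ) ∧
    ∀ X : Set Δ.ord.ToType, #X = θ →
      ∀ g : Δ.ord.ToType → lam.ord.ToType,
        ∃ h ∈ ℋ, #{ξ ∈ X | g ξ ∈ h ξ} = θ }

/-- The generalized bounding number `𝔟_θ`: the least size of a family of functions in `θ^θ`
unbounded in the eventual-domination order `<*` (`f <* g` iff `f ξ < g ξ` for all but
fewer than `θ` many `ξ`). -/
def bnum (θ : Cardinal) : Cardinal :=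
  sInf { c | ∃ F : Set (θ.ord.ToType → θ.ord.ToType), #F = c ∧
    ∀ g : θ.ord.ToType → θ.ord.ToType, ∃ f ∈ F, θ ≤ #{ξ | g ξ ≤ f ξ} }

/-- If `θ` is an infinite regular cardinal and `λ` a cardinal with `θ = cf(λ) < λ`,
then `m(θ,λ) > λ`. -/
theorem meetNum_gt_of_cof_eq (θ lam : Cardinal)
    (hθ : ℵ₀ ≤ θ) (hreg : θ.IsRegular) (hcof : lam.ord.cof = θ) (hlt : θ < lam) :
    lam < meetNum θ lam := by
  classical
  have hlam : ℵ₀ ≤ lam := hθ.trans hlt.le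
  have hα : #lam.ord.ToType = lam := Cardinal.mk_ord_toType lam
  -- the defining set is nonempty
  have hne : { c | ∃ 𝒴 : Set (Set lam.ord.ToType), #𝒴 = c ∧
      (∀ Y ∈ 𝒴, #Y = θ) ∧
      ∀ X : Set lam.ord.ToType, #X = θ → ∃ Y ∈ 𝒴, #(X ∩ Y : Set _) = θ }.Nonempty := by
    refine ⟨#{Y : Set lam.ord.ToType | #Y = θ}, {Y : Set lam.ord.ToType | #Y = θ}, rfl, fun Y hY => hY, ?_⟩
    intro X hX
    exact ⟨X, hX, by rwa [Set.inter_self]⟩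
  obtain ⟨𝒴, h𝒴card, h𝒴θ, h𝒴meet⟩ := csInf_mem hne
  by_contra hcon
  push_neg at hcon
  rw [meetNum] at hcon
  have h𝒴le : #𝒴 ≤ lam := h𝒴card.le.trans hcon
  -- 𝒴 is nonempty, else contradiction with any X of size θ
  rcases eq_empty_or_nonempty 𝒴 with rfl | ⟨Y₀, hY₀⟩
  · obtain ⟨X, hX⟩ := Cardinal.le_mk_iff_exists_set.mp (by rw [hα]; exact hlt.le : θ ≤ #lam.ord.ToType)
    obtain ⟨Y, hY, -⟩ := h𝒴meet X hX
    exact hY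
  -- surjection-like enumeration e : lam.ord.ToType → Set lam.ord.ToType of 𝒴
  obtain ⟨g⟩ : Nonempty (↥𝒴 ↪ lam.ord.ToType) := by
    rw [← Cardinal.le_def, hα]; exact h𝒴le
  set e : lam.ord.ToType → Set lam.ord.ToType := fun a =>
    if h : ∃ Y : ↥𝒴, g Y = a then (h.choose : Set lam.ord.ToType) else Y₀ with he_def
  have he1 : ∀ a, e a ∈ 𝒴 := by
    intro a
    rw [he_def]
    dsimp only
    split
    · next h => exact h.choose.2
    · exact hY₀
  have he2 : ∀ Y ∈ 𝒴, ∃ a, e a = Y := by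
    intro Y hY
    refine ⟨g ⟨Y, hY⟩, ?_⟩
    have h : ∃ Z : ↥𝒴, g Z = g ⟨Y, hY⟩ := ⟨⟨Y, hY⟩, rfl⟩
    rw [he_def]
    dsimp only
    rw [dif_pos h]
    have hc := h.choose_spec
    have : h.choose = (⟨Y, hY⟩ : ↥𝒴) := g.injective hc
    rw [this]
  -- strictly increasing unbounded map f : θ.ord.ToType → lam.ord.ToType, θ.ord.ToType of order type θ.ord
  have hι : #θ.ord.ToType = θ := Cardinal.mk_ord_toType θ
  obtain ⟨S, hSU, hSt⟩ := Ordinal.exists_ord_cof_eq lam.ord.ToType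
  rw [Ordinal.cof_toType, hcof] at hSt
  have htyeq := Ordinal.type_toType θ.ord
  have instS : IsWellOrder S (Subrel ((· < ·) : lam.ord.ToType → lam.ord.ToType → Prop) S) :=
    @RelEmbedding.isWellOrder _ _ _ _
      (Subrel.relEmbedding ((· < ·) : lam.ord.ToType → lam.ord.ToType → Prop) S) isWellOrder_lt
  obtain ⟨j⟩ := Ordinal.type_eq.mp (htyeq.trans hSt.symm)
  set f : θ.ord.ToType → lam.ord.ToType := fun i => (j i : lam.ord.ToType) with hf_def
  have hfmono : ∀ {i i' : θ.ord.ToType}, i < i' → f i < f i' := by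
    intro i i' h
    exact j.map_rel_iff.mpr h
  have hfrange : ∀ a : lam.ord.ToType, ∃ i, a ≤ f i := by
    intro a
    obtain ⟨b, hb, hba⟩ := hSU a
    refine ⟨j.symm ⟨b, hb⟩, ?_⟩
    have hfb : f (j.symm ⟨b, hb⟩) = b := by
      rw [hf_def]; simp
    rw [hfb]; exact hba
  -- small initial segments
  have hIio_lam : ∀ a : lam.ord.ToType, #(Set.Iio a) < lam := fun a => Cardinal.mk_Iio_ord_toType a
  have hIic_lam : ∀ a : lam.ord.ToType, #(Set.Iic a) < lam := by
    intro a
    have hsub : Set.Iic a ⊆ Set.Iio a ∪ {a} := by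
      intro z hz
      rcases lt_or_eq_of_le (Set.mem_Iic.mp hz) with h | h
      · exact Or.inl h
      · exact Or.inr (by simp [h])
    calc #(Set.Iic a) ≤ #(Set.Iio a ∪ {a} : Set lam.ord.ToType) := Cardinal.mk_le_mk_of_subset hsub
      _ ≤ #(Set.Iio a) + #({a} : Set lam.ord.ToType) := Cardinal.mk_union_le _ _
      _ < lam := Cardinal.add_lt_of_lt hlam (hIio_lam a)
          (by simpa using (Cardinal.one_lt_aleph0.trans_le hlam))
  -- the bad set
  set C : θ.ord.ToType → Set lam.ord.ToType := fun i => Set.Iic (f i) ∪ ⋃ (a : Set.Iio (f i)), e a with hC_def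
  have hCsmall : ∀ i, #(C i) < lam := by
    intro i
    have h1 : #(⋃ (a : Set.Iio (f i)), e (a : lam.ord.ToType)) < lam := by
      calc #(⋃ (a : Set.Iio (f i)), e (a : lam.ord.ToType))
          ≤ #(Set.Iio (f i)) * ⨆ (a : Set.Iio (f i)), #(e (a : lam.ord.ToType)) :=
            Cardinal.mk_iUnion_le _
        _ ≤ #(Set.Iio (f i)) * θ := by
            gcongr
            exact ciSup_le' fun a => (h𝒴θ _ (he1 a)).le
        _ < lam := Cardinal.mul_lt_of_lt hlam (hIio_lam (f i)) hlt
    calc #(C i) ≤ #(Set.Iic (f i)) + #(⋃ (a : Set.Iio (f i)), e (a : lam.ord.ToType)) :=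
          Cardinal.mk_union_le _ _
      _ < lam := Cardinal.add_lt_of_lt hlam (hIic_lam (f i)) h1
  have hCex : ∀ i, ∃ z : lam.ord.ToType, z ∉ C i := by
    intro i
    by_contra h
    push_neg at h
    have huniv : C i = Set.univ := eq_univ_of_forall h
    have hsm := hCsmall i
    rw [huniv, Cardinal.mk_univ, hα] at hsm
    exact lt_irrefl _ hsm
  choose x hx using hCex
  have hx1 : ∀ i, f i < x i := by
    intro i
    by_contra h
    exact hx i (Or.inl (not_lt.mp h))
  have hx2 : ∀ i (a : lam.ord.ToType), a < f i → x i ∉ e a := by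
    intro i a ha hmem
    exact hx i (Or.inr (Set.mem_iUnion.mpr ⟨⟨a, ha⟩, hmem⟩))
  set X : Set lam.ord.ToType := Set.range x with hX_def
  -- X has cardinality θ
  have hXub : Set.Unbounded (· < ·) X := by
    intro a
    obtain ⟨i, hi⟩ := hfrange a
    exact ⟨x i, ⟨i, rfl⟩, not_lt.mpr (hi.trans (hx1 i).le)⟩
  have hXge : θ ≤ #X := by
    have hc := Order.cof_le (s := X) (fun a => let ⟨b, hb, hba⟩ := hXub a; ⟨b, hb, not_lt.mp hba⟩)
    rwa [Ordinal.cof_toType, hcof] at hc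
  have hXle : #X ≤ θ := by
    rw [hX_def]
    exact Cardinal.mk_range_le.trans hι.le
  have hXcard : #X = θ := le_antisymm hXle hXge
  -- all intersections are small: contradiction
  obtain ⟨Y, hY, hYcard⟩ := h𝒴meet X hXcard
  obtain ⟨a, rfl⟩ := he2 Y hY
  obtain ⟨i₀, hi₀⟩ := hfrange a
  have hsub : X ∩ e a ⊆ x '' Set.Iic i₀ := by
    rintro z ⟨⟨i, rfl⟩, hz⟩
    refine ⟨i, ?_, rfl⟩
    show i ≤ i₀
    by_contra h
    push_neg at h
    exact hx2 i a (hi₀.trans_lt (hfmono h)) hz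
  have hIic_θ : #(Set.Iic i₀) < θ := by
    have hlt' : #(Set.Iio i₀) < θ := Cardinal.mk_Iio_ord_toType i₀
    have hsub' : Set.Iic i₀ ⊆ Set.Iio i₀ ∪ {i₀} := by
      intro i hi
      rcases lt_or_eq_of_le (Set.mem_Iic.mp hi) with h | h
      · exact Or.inl h
      · exact Or.inr (by simp [h])
    calc #(Set.Iic i₀) ≤ #(Set.Iio i₀ ∪ {i₀} : Set θ.ord.ToType) :=
          Cardinal.mk_le_mk_of_subset hsub'
      _ ≤ #(Set.Iio i₀) + #({i₀} : Set θ.ord.ToType) := Cardinal.mk_union_le _ _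
      _ < θ := Cardinal.add_lt_of_lt hθ hlt'
          (by simpa using (Cardinal.one_lt_aleph0.trans_le hθ))
  have hfin : #(X ∩ e a : Set lam.ord.ToType) < θ := by
    calc #(X ∩ e a : Set lam.ord.ToType) ≤ #(x '' Set.Iic i₀) := Cardinal.mk_le_mk_of_subset hsub
      _ ≤ #(Set.Iic i₀) := Cardinal.mk_image_le
      _ < θ := hIic_θ
  exact absurd hYcard hfin.ne

end
end

section
/- If θ is an infinite regular cardinal and λ is a cardinal with θ < λ < θ^{+θ} (i.e., λ is among the first θ many successors of θ), then m(θ,λ) = λ. -/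
open Cardinal Set

noncomputable section

/-- The `o`-th iterated cardinal successor of `θ`; `succIter θ θ.ord` is `θ^{+θ}`. -/
def succIter (θ : Cardinal) (o : Ordinal) : Cardinal :=
  o.limitRecOn θ (fun _ ih => Order.succ ih)
    (fun o _ ih => ⨆ i : Set.Iio o, ih i.1 i.2)

universe u

namespace MeetAux

variable {θ : Cardinal.{u}}

theorem succIter_zero (θ : Cardinal.{u}) : succIter θ 0 = θ :=
  Ordinal.limitRecOn_zero ..

theorem succIter_succ (θ : Cardinal.{u}) (o : Ordinal.{u}) :
    succIter θ (Order.succ o) = Order.succ (succIter θ o) :=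
  Ordinal.limitRecOn_succ ..

theorem succIter_limit (θ : Cardinal.{u}) {o : Ordinal.{u}} (h : Order.IsSuccLimit o) :
    succIter θ o = ⨆ i : Set.Iio o, succIter θ i.1 :=
  Ordinal.limitRecOn_limit _ _ _ _ h

theorem succIter_strictMono (θ : Cardinal.{u}) :
    StrictMono (fun o : Ordinal.{u} => succIter θ o) := by
  intro i j
  simp only []
  induction j using Ordinal.induction with
  | _ j IH =>
    intro hij
    rcases Ordinal.zero_or_succ_or_isSuccLimit j with rfl | ⟨k, rfl⟩ | hj
    · exact absurd hij (by simp)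
    · rw [succIter_succ]
      rcases lt_or_eq_of_le (Order.lt_succ_iff.mp hij) with h | rfl
      · exact (IH k (Order.lt_succ k) h).trans (Order.lt_succ _)
      · exact Order.lt_succ _
    · rw [succIter_limit θ hj]
      have h1 : Order.succ i < j := hj.succ_lt hij
      calc succIter θ i < succIter θ (Order.succ i) := by
            rw [succIter_succ]; exact Order.lt_succ _
        _ ≤ ⨆ p : Set.Iio j, succIter θ p.1 :=
            le_ciSup (Cardinal.bddAbove_range _) (⟨Order.succ i, h1⟩ : Set.Iio j)

theorem le_succIter (θ : Cardinal.{u}) (o : Ordinal.{u}) : θ ≤ succIter θ o := by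
  have := (succIter_strictMono θ).monotone (zero_le : 0 ≤ o)
  rwa [succIter_zero] at this

theorem exists_succIter_eq {lam : Cardinal.{u}} (hθl : θ ≤ lam)
    (hup : lam < succIter θ θ.ord) : ∃ o < θ.ord, lam = succIter θ o := by
  have hA : lam ≤ succIter θ lam.ord := by
    have hs : StrictMono (fun o : Ordinal.{u} => (succIter θ o).ord) :=
      fun a b h => Cardinal.ord_lt_ord.2 (succIter_strictMono θ h)
    have h2 := hs.le_apply (x := lam.ord)
    rw [← Cardinal.ord_le_ord]
    exact h2
  set A : Set Ordinal.{u} := {o | lam ≤ succIter θ o} with hAdef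
  have hAne : A.Nonempty := ⟨lam.ord, hA⟩
  set o := sInf A with ho
  have hoA : lam ≤ succIter θ o := csInf_mem hAne
  have hmin : ∀ i < o, succIter θ i < lam := by
    intro i hi
    by_contra h
    push_neg at h
    exact (csInf_le' (show i ∈ A from h)).not_gt hi
  have heq : lam = succIter θ o := by
    rcases Ordinal.zero_or_succ_or_isSuccLimit o with h0 | ⟨k, hk⟩ | hl
    · rw [h0, succIter_zero]
      rw [h0, succIter_zero] at hoA
      exact le_antisymm hoA hθl
    · have hk' : succIter θ k < lam := hmin k (hk ▸ Order.lt_succ k)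
      rw [← hk, succIter_succ]
      refine le_antisymm ?_ (Order.succ_le_of_lt hk')
      rw [← hk, succIter_succ] at hoA
      exact hoA
    · rw [succIter_limit θ hl]
      refine le_antisymm ?_ ?_
      · rw [succIter_limit θ hl] at hoA; exact hoA
      · have : Nonempty (Set.Iio o) := ⟨⟨0, hl.pos⟩⟩
        exact ciSup_le' fun i => (hmin i.1 i.2).le
  refine ⟨o, ?_, heq⟩
  by_contra h
  push_neg at h
  exact absurd (heq ▸ (succIter_strictMono θ).monotone h : succIter θ θ.ord ≤ lam) hup.not_ge

/-- A type `A` admits a meeting family for `θ` of size at most `#A`. -/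
def Good (θ : Cardinal.{u}) (A : Type u) : Prop :=
  ∃ 𝒴 : Set (Set A), #𝒴 ≤ #A ∧ (∀ Y ∈ 𝒴, #Y = θ) ∧
    ∀ X : Set A, #X = θ → ∃ Y ∈ 𝒴, #(X ∩ Y : Set A) = θ

theorem Good.of_mk_eq {A B : Type u} (h : #A = #B) (hg : Good θ A) : Good θ B := by
  obtain ⟨e⟩ := Cardinal.eq.1 h
  obtain ⟨𝒴, hle, hmem, hcov⟩ := hg
  refine ⟨(Set.image e) '' 𝒴, ?_, ?_, ?_⟩
  · calc #((Set.image e) '' 𝒴) ≤ #𝒴 := Cardinal.mk_image_le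
      _ ≤ #A := hle
      _ = #B := h
  · rintro Y ⟨Y', hY', rfl⟩
    rw [Cardinal.mk_image_eq e.injective]
    exact hmem Y' hY'
  · intro X hX
    have hX' : #(e.symm '' X : Set A) = θ := by
      rw [Cardinal.mk_image_eq e.symm.injective]; exact hX
    obtain ⟨Y', hY', hc⟩ := hcov (e.symm '' X) hX'
    refine ⟨e '' Y', ⟨Y', hY', rfl⟩, ?_⟩
    have him : e '' (e.symm '' X ∩ Y') = X ∩ e '' Y' := by
      rw [Set.image_inter e.injective]
      congr 1
      simpa using e.symm.symm_image_image X
    rw [← him, Cardinal.mk_image_eq e.injective]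
    exact hc

theorem good_of_cover {N ι : Type u} (θ : Cardinal.{u}) (S : ι → Set N)
    (hN : ℵ₀ ≤ #N)
    (hg : ∀ i, Good θ ↥(S i))
    (hι : #ι ≤ #N)
    (hX : ∀ X : Set N, #X = θ → ∃ i, #(X ∩ S i : Set N) = θ) :
    Good θ N := by
  choose 𝒴 hle hmem hcov using hg
  refine ⟨⋃ i, (Set.image (Subtype.val : ↥(S i) → N)) '' (𝒴 i), ?_, ?_, ?_⟩
  · calc #(⋃ i, (Set.image (Subtype.val : ↥(S i) → N)) '' (𝒴 i)) ≤
        Cardinal.sum fun i => #((Set.image (Subtype.val : ↥(S i) → N)) '' (𝒴 i)) :=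
          Cardinal.mk_iUnion_le_sum_mk
      _ ≤ Cardinal.sum fun _ : ι => #N := by
          refine Cardinal.sum_le_sum _ _ fun i => ?_
          calc #((Set.image (Subtype.val : ↥(S i) → N)) '' (𝒴 i)) ≤ #(𝒴 i) :=
                Cardinal.mk_image_le
            _ ≤ #(S i) := hle i
            _ ≤ #N := Cardinal.mk_subtype_le _
      _ = #ι * #N := Cardinal.sum_const' ι #N
      _ ≤ #N * #N := mul_le_mul_left hι _
      _ = #N := Cardinal.mul_eq_self hN
  · rintro Y ⟨_, ⟨i, rfl⟩, ⟨Y', hY', rfl⟩⟩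
    rw [Cardinal.mk_image_eq Subtype.val_injective]
    exact hmem i Y' hY'
  · intro X hXθ
    obtain ⟨i, hi⟩ := hX X hXθ
    have hpre : #((Subtype.val : ↥(S i) → N) ⁻¹' X) = θ := by
      rw [← Cardinal.mk_image_eq (f := (Subtype.val : ↥(S i) → N)) Subtype.val_injective,
        Subtype.image_preimage_coe, Set.inter_comm]
      exact hi
    obtain ⟨Y', hY', hc⟩ := hcov i _ hpre
    refine ⟨Subtype.val '' Y', Set.mem_iUnion.2 ⟨i, ⟨Y', hY', rfl⟩⟩, ?_⟩
    refine le_antisymm ?_ ?_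
    · rw [← hXθ]
      exact Cardinal.mk_le_mk_of_subset Set.inter_subset_left
    · rw [← hc, ← Cardinal.mk_image_eq (s := Subtype.val ⁻¹' X ∩ Y') Subtype.val_injective]
      apply Cardinal.mk_le_mk_of_subset
      rw [Set.image_inter Subtype.val_injective]
      exact Set.inter_subset_inter (by simpa using Set.image_preimage_subset _ _) le_rfl

theorem exists_superset_mk_eq {α : Type u} {s : Set α} {c : Cardinal.{u}}
    (h1 : #s ≤ c) (h2 : c ≤ #α) (hc : ℵ₀ ≤ c) : ∃ t, s ⊆ t ∧ #t = c := by
  obtain ⟨C, hC⟩ := Cardinal.le_mk_iff_exists_set.1 h2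
  refine ⟨s ∪ C, Set.subset_union_left, le_antisymm ?_ ?_⟩
  · calc #(s ∪ C : Set α) ≤ #s + #C := Cardinal.mk_union_le _ _
      _ ≤ c + c := add_le_add h1 hC.le
      _ = c := Cardinal.add_eq_self hc
  · rw [← hC]
    exact Cardinal.mk_le_mk_of_subset Set.subset_union_right

theorem good_succIter (hθ : ℵ₀ ≤ θ) (hreg : θ.IsRegular) :
    ∀ o : Ordinal.{u}, o < θ.ord → Good θ (succIter θ o).ord.ToType := by
  intro o
  induction o using Ordinal.induction with
  | _ o IH =>
  intro ho
  rcases Ordinal.zero_or_succ_or_isSuccLimit o with rfl | ⟨k, rfl⟩ | hl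
  · rw [succIter_zero]
    refine ⟨{Set.univ}, ?_, ?_, ?_⟩
    · rw [Cardinal.mk_singleton, Cardinal.mk_ord_toType]
      exact one_lt_aleph0.le.trans hθ
    · rintro Y hY
      rw [Set.mem_singleton_iff] at hY
      subst hY
      rw [Cardinal.mk_univ, Cardinal.mk_ord_toType]
    · intro X hX
      exact ⟨Set.univ, rfl, by rwa [Set.inter_univ]⟩
  · -- successor case
    set μ := succIter θ k with hμ
    have hθμ : θ ≤ μ := le_succIter θ k
    have hμinf : ℵ₀ ≤ μ := hθ.trans hθμ
    have hk : k < θ.ord := (Order.lt_succ k).trans ho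
    have IHk : Good θ μ.ord.ToType := IH k (Order.lt_succ k) hk
    rw [succIter_succ]
    have hNcard : #(Order.succ μ).ord.ToType = Order.succ μ := Cardinal.mk_ord_toType _
    have hNinf : ℵ₀ ≤ #(Order.succ μ).ord.ToType := by
      rw [hNcard]; exact hμinf.trans (Order.le_succ μ)
    have hIio : ∀ a : (Order.succ μ).ord.ToType, #(Set.Iio a) ≤ μ := fun a =>
      Order.lt_succ_iff.mp (Cardinal.mk_Iio_ord_toType a)
    have hT : ∀ a : (Order.succ μ).ord.ToType,
        ∃ t : Set (Order.succ μ).ord.ToType, Set.Iio a ⊆ t ∧ #t = μ := fun a =>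
      exists_superset_mk_eq (hIio a) (by rw [hNcard]; exact Order.le_succ μ) hμinf
    choose T hTsub hTcard using hT
    refine good_of_cover θ T hNinf
      (fun a => IHk.of_mk_eq (by rw [Cardinal.mk_ord_toType]; exact (hTcard a).symm))
      le_rfl ?_
    intro X hX
    haveI : IsWellOrder (Order.succ μ).ord.ToType (· < ·) := isWellOrder_lt
    have hbd : Set.Bounded (· < ·) X := by
      refine not_isCofinal_iff.1 fun hc => ?_
      have hcf := Order.cof_le hc
      rw [Ordinal.cof_toType, (Cardinal.isRegular_succ hμinf).cof_eq, hX] at hcf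
      exact (hθμ.trans_lt (Order.lt_succ μ)).not_ge hcf
    obtain ⟨a, ha⟩ := hbd
    refine ⟨a, ?_⟩
    have hsub : X ⊆ T a := fun x hx => hTsub a (ha x hx)
    rwa [Set.inter_eq_self_of_subset_left hsub]
  · -- limit case
    haveI : IsWellOrder o.ToType (· < ·) := isWellOrder_lt
    set lamc := succIter θ o with hlamc
    have hθlam : θ ≤ lamc := le_succIter θ o
    have hlaminf : ℵ₀ ≤ lamc := hθ.trans hθlam
    have hιcard : #o.ToType = o.card := Cardinal.mk_toType o
    have hocard : o.card < θ := Cardinal.lt_ord.1 ho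
    set β : o.ToType → Ordinal.{u} :=
      fun x => Ordinal.typein (α := o.ToType) (· < ·) x with hβ
    have hβlt : ∀ x, β x < o := fun x => Ordinal.typein_lt_self x
    set lamf : o.ToType → Cardinal.{u} := fun x => succIter θ (β x) with hlamf
    have hlamflt : ∀ x, lamf x < lamc := fun x => succIter_strictMono θ (hβlt x)
    have hsum : Cardinal.sum lamf = lamc := by
      apply le_antisymm
      · calc Cardinal.sum lamf ≤ Cardinal.sum (fun _ : o.ToType => lamc) :=
              Cardinal.sum_le_sum _ _ fun x => (hlamflt x).le
          _ = #o.ToType * lamc := Cardinal.sum_const' _ lamc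
          _ ≤ lamc := by
              apply (Cardinal.mul_le_max _ _).trans
              apply max_le (max_le _ le_rfl) hlaminf
              rw [hιcard]
              exact hocard.le.trans hθlam
      · rw [hlamc, succIter_limit θ hl]
        have hne : Nonempty (Set.Iio o) := ⟨⟨0, hl.pos⟩⟩
        apply ciSup_le'
        rintro ⟨i, hi⟩
        obtain ⟨x, hx⟩ := Ordinal.typein_surj (α := o.ToType) (· < ·)
          (show i < Ordinal.type (α := o.ToType) (· < ·) by rwa [Ordinal.type_toType])
        calc succIter θ (⟨i, hi⟩ : Set.Iio o).1 = lamf x := by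
              simp only [hlamf, hβ, hx]
          _ ≤ Cardinal.sum lamf := Cardinal.le_sum lamf x
    have hmkN : #(Σ x : o.ToType, (lamf x).ord.ToType) = #(lamc.ord.ToType) := by
      rw [Cardinal.mk_sigma, Cardinal.mk_ord_toType]
      simp only [Cardinal.mk_ord_toType]
      exact hsum
    obtain ⟨e⟩ := Cardinal.eq.1 hmkN
    set S : o.ToType → Set (lamc.ord.ToType) := fun x => Set.range (fun a => e ⟨x, a⟩) with hS
    have hinj : ∀ x, Function.Injective (fun a => e ⟨x, a⟩) := by
      intro x a b hab
      have := e.injective hab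
      exact eq_of_heq (Sigma.mk.inj_iff.1 this).2
    have hScard : ∀ x, #(S x) = lamf x := by
      intro x
      rw [hS]
      simp only []
      rw [Cardinal.mk_range_eq _ (hinj x), Cardinal.mk_ord_toType]
    refine good_of_cover θ S (by rw [Cardinal.mk_ord_toType]; exact hlaminf) ?_ ?_ ?_
    · intro x
      exact (IH (β x) (hβlt x) ((hβlt x).trans ho)).of_mk_eq
        (by rw [Cardinal.mk_ord_toType]; exact (hScard x).symm)
    · rw [Cardinal.mk_ord_toType, hιcard]
      exact hocard.le.trans hθlam
    · intro X hX
      by_contra h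
      push_neg at h
      have hlt' : ∀ x, #(X ∩ S x : Set _) < θ := fun x =>
        lt_of_le_of_ne (by rw [← hX]; exact Cardinal.mk_le_mk_of_subset Set.inter_subset_left)
          (h x)
      have huniv : (⋃ x, S x) = Set.univ := by
        ext n
        simp only [Set.mem_iUnion, Set.mem_univ, iff_true]
        obtain ⟨⟨x, a⟩, hn⟩ := e.surjective n
        exact ⟨x, ⟨a, hn⟩⟩
      have hcover : X = ⋃ x, (X ∩ S x) := by
        rw [← Set.inter_iUnion, huniv, Set.inter_univ]
      have hfin : #X < θ := by
        rw [hcover]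
        calc #(⋃ x, (X ∩ S x) : Set _) ≤ Cardinal.sum (fun x => #(X ∩ S x : Set _)) :=
              Cardinal.mk_iUnion_le_sum_mk
          _ < θ := Cardinal.sum_lt_of_isRegular hreg (by rw [hιcard]; exact hocard) hlt'
      rw [hX] at hfin
      exact hfin.false

end MeetAux

/-- If `θ` is an infinite regular cardinal and `λ` a cardinal with `θ < λ < θ^{+θ}`,
then `m(θ,λ) = λ`. -/
theorem meetNum_eq_of_lt_succIter (θ lam : Cardinal)
    (hθ : ℵ₀ ≤ θ) (hreg : θ.IsRegular)
    (hlt : θ < lam) (hup : lam < succIter θ θ.ord) :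
    meetNum θ lam = lam := by
  obtain ⟨o, ho, hlameq⟩ := MeetAux.exists_succIter_eq hlt.le hup
  have hgood : MeetAux.Good θ lam.ord.ToType := by
    rw [hlameq]; exact MeetAux.good_succIter hθ hreg o ho
  obtain ⟨𝒴, hle, hmem, hcov⟩ := hgood
  have hlaminf : ℵ₀ ≤ lam := hθ.trans hlt.le
  unfold meetNum
  apply le_antisymm
  · refine le_trans (csInf_le' ?_) (hle.trans_eq (Cardinal.mk_ord_toType lam))
    exact ⟨𝒴, rfl, hmem, hcov⟩
  · refine le_csInf ⟨#𝒴, ⟨𝒴, rfl, hmem, hcov⟩⟩ ?_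
    rintro c ⟨𝒵, rfl, hmem', hcov'⟩
    by_contra hlt'
    push_neg at hlt'
    have hU : #(⋃₀ 𝒵 : Set _) < lam := by
      refine (Cardinal.mk_sUnion_le 𝒵).trans_lt (Cardinal.mul_lt_of_lt hlaminf hlt' ?_)
      exact lt_of_le_of_lt (ciSup_le' fun s => (hmem' s s.2).le) hlt
    have hcompl : lam ≤ #((⋃₀ 𝒵)ᶜ : Set _) := by
      by_contra hc
      push_neg at hc
      have hsum : #(⋃₀ 𝒵 : Set _) + #((⋃₀ 𝒵)ᶜ : Set _) = lam := by
        rw [Cardinal.mk_sum_compl, Cardinal.mk_ord_toType]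
      exact absurd hsum (Cardinal.add_lt_of_lt hlaminf hU hc).ne
    obtain ⟨X, hXsub, hXcard⟩ := Cardinal.le_mk_iff_exists_subset.1 (hlt.le.trans hcompl)
    obtain ⟨Y, hY, hXY⟩ := hcov' X hXcard
    have hempty : X ∩ Y = (∅ : Set _) := by
      ext z
      simp only [Set.mem_inter_iff, Set.mem_empty_iff_false, iff_false, not_and]
      intro hzX hzY
      exact (hXsub hzX) (Set.mem_sUnion.2 ⟨Y, hY, hzY⟩)
    rw [hempty, Cardinal.mk_emptyCollection] at hXY
    exact (Cardinal.aleph0_pos.trans_le hθ).ne' hXY.symm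

end
end

section
/- For every infinite regular cardinal θ, the cardinal m(θ,θ,θ,θ) equals the bounding number 𝔟_θ, where m(θ,θ,θ,θ) is the least size of a family ℋ of functions from θ to [θ]^{<θ} such that for every X ⊆ θ of size θ and every g : X → θ, there exists h ∈ ℋ with |{ξ ∈ X : g(ξ) ∈ h(ξ)}| = θ. -/
open Cardinal Set

noncomputable section

lemma my_exists_strict_bound (θ : Cardinal) (hθ : ℵ₀ ≤ θ) (hreg : θ.IsRegular)
    (s : Set θ.ord.ToType) (hs : #s < θ) : ∃ b, ∀ y ∈ s, y < b := by
  set e := Ordinal.ToType.mk (o := θ.ord) with he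
  have hlim := Cardinal.isSuccLimit_ord hθ
  have hsup : (⨆ y : s, Order.succ ((e.symm y.1 : Set.Iio θ.ord) : Ordinal)) < θ.ord :=
    Cardinal.iSup_lt_ord_of_isRegular hreg hs fun y => hlim.succ_lt (e.symm y.1).2
  refine ⟨e ⟨_, hsup⟩, fun y hy => ?_⟩
  have h1 : ((e.symm y : Set.Iio θ.ord) : Ordinal)
      < ⨆ y : s, Order.succ ((e.symm y.1 : Set.Iio θ.ord) : Ordinal) :=
    lt_of_lt_of_le (Order.lt_succ _)
      (Ordinal.le_iSup (fun y : s => Order.succ ((e.symm y.1 : Set.Iio θ.ord) : Ordinal)) ⟨y, hy⟩)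
  have h2 : e.symm y < (⟨_, hsup⟩ : Set.Iio θ.ord) := h1
  calc y = e (e.symm y) := (e.apply_symm_apply y).symm
    _ < e ⟨_, hsup⟩ := e.strictMono h2

lemma my_mk_Iic_lt (θ : Cardinal) (hθ : ℵ₀ ≤ θ) (a : θ.ord.ToType) : #(Set.Iic a) < θ := by
  have h : Set.Iic a = insert a (Set.Iio a) := by
    ext x; simp [le_iff_lt_or_eq, or_comm]
  rw [h]
  exact Cardinal.mk_insert_le.trans_lt
    (Cardinal.add_lt_of_lt hθ (Cardinal.mk_Iio_ord_toType a) (one_lt_aleph0.trans_le hθ))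

lemma my_mk_union_lt (θ : Cardinal) (hreg : θ.IsRegular) {ι : Type*} {f : ι → Set θ.ord.ToType}
    (hι : #ι < θ) (hf : ∀ i, #(f i) < θ) : #(⋃ i, f i) < θ :=
  Cardinal.mk_iUnion_le_sum_mk.trans_lt (Cardinal.sum_lt_of_isRegular hreg hι hf)

theorem meetNum4_eq_bnum' (θ : Cardinal) (hθ : ℵ₀ ≤ θ) (hreg : θ.IsRegular) :
    (sInf { c | ∃ ℋ : Set (θ.ord.ToType → Set θ.ord.ToType), #ℋ = c ∧
      (∀ h ∈ ℋ, ∀ ξ, #(h ξ) < θ) ∧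
      ∀ X : Set θ.ord.ToType, #X = θ →
        ∀ g : θ.ord.ToType → θ.ord.ToType,
          ∃ h ∈ ℋ, #{ξ ∈ X | g ξ ∈ h ξ} = θ }) =
    sInf { c | ∃ F : Set (θ.ord.ToType → θ.ord.ToType), #F = c ∧
      ∀ g : θ.ord.ToType → θ.ord.ToType, ∃ f ∈ F, θ ≤ #{ξ | g ξ ≤ f ξ} } := by
  have hT : #θ.ord.ToType = θ := Cardinal.mk_ord_toType θ
  have h1θ : (1 : Cardinal) < θ := one_lt_aleph0.trans_le hθ
  -- nonemptiness of the bnum set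
  have hS₂ne : ({ c | ∃ F : Set (θ.ord.ToType → θ.ord.ToType), #F = c ∧
      ∀ g : θ.ord.ToType → θ.ord.ToType, ∃ f ∈ F, θ ≤ #{ξ | g ξ ≤ f ξ} }).Nonempty := by
    refine ⟨_, Set.univ, rfl, fun g => ⟨g, Set.mem_univ _, ?_⟩⟩
    have huniv : {ξ | g ξ ≤ g ξ} = Set.univ := by ext ξ; simp
    rw [huniv, Cardinal.mk_univ, hT]
  -- nonemptiness of the meetNum4 set
  have hS₁ne : ({ c | ∃ ℋ : Set (θ.ord.ToType → Set θ.ord.ToType), #ℋ = c ∧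
      (∀ h ∈ ℋ, ∀ ξ, #(h ξ) < θ) ∧
      ∀ X : Set θ.ord.ToType, #X = θ →
        ∀ g : θ.ord.ToType → θ.ord.ToType,
          ∃ h ∈ ℋ, #{ξ ∈ X | g ξ ∈ h ξ} = θ }).Nonempty := by
    refine ⟨_, {h | ∀ ξ, #(h ξ) < θ}, rfl, fun h hh => hh, fun X hX g => ?_⟩
    refine ⟨fun ξ => {g ξ}, fun ξ => by simpa using h1θ, ?_⟩
    have hXX : {ξ ∈ X | g ξ ∈ ({g ξ} : Set θ.ord.ToType)} = X := by ext ξ; simp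
    rw [hXX, hX]
  apply le_antisymm
  · -- meetNum4 ≤ bnum
    refine le_csInf hS₂ne ?_
    rintro c ⟨F, hFc, hFunb⟩
    -- replace each f by a "cumulative" set-valued function
    set H : (θ.ord.ToType → θ.ord.ToType) → θ.ord.ToType → Set θ.ord.ToType :=
      fun f ξ => {η | ∃ ζ ≤ ξ, η ≤ f ζ} with hH
    refine le_trans (le_trans (csInf_le' ⟨H '' F, rfl, ?_, ?_⟩) Cardinal.mk_image_le) hFc.le
    · rintro _ ⟨f, _, rfl⟩ ξ
      have heq : H f ξ = ⋃ ζ : Set.Iic ξ, Set.Iic (f ζ.1) := by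
        ext η
        simp only [hH, Set.mem_setOf_eq, Set.mem_iUnion, Set.mem_Iic]
        exact ⟨fun ⟨ζ, hζ, hη⟩ => ⟨⟨ζ, hζ⟩, hη⟩, fun ⟨⟨ζ, hζ⟩, hη⟩ => ⟨ζ, hζ, hη⟩⟩
      rw [heq]
      exact my_mk_union_lt θ hreg (my_mk_Iic_lt θ hθ ξ) fun ζ => my_mk_Iic_lt θ hθ _
    · intro X hX g
      -- choose for each ξ an element of X above ξ
      have hne : ∀ ξ : θ.ord.ToType, (X ∩ Set.Ici ξ).Nonempty := by
        intro ξ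
        by_contra hcon
        rw [Set.not_nonempty_iff_eq_empty] at hcon
        have hsub : X ⊆ Set.Iio ξ := by
          intro x hx
          by_contra hlt
          exact (Set.eq_empty_iff_forall_notMem.1 hcon x) ⟨hx, Set.mem_Ici.2 (not_lt.1 fun h => hlt (Set.mem_Iio.2 h))⟩
        have hle := Cardinal.mk_le_mk_of_subset hsub
        rw [hX] at hle
        exact absurd hle (not_le.2 (Cardinal.mk_Iio_ord_toType ξ))
      set n : θ.ord.ToType → θ.ord.ToType := fun ξ => (hne ξ).choose with hn
      have hnX : ∀ ξ, n ξ ∈ X := fun ξ => (hne ξ).choose_spec.1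
      have hnle : ∀ ξ, ξ ≤ n ξ := fun ξ => (hne ξ).choose_spec.2
      obtain ⟨f, hfF, hfA⟩ := hFunb (fun ξ => g (n ξ))
      set A : Set θ.ord.ToType := {ξ | g (n ξ) ≤ f ξ} with hA
      refine ⟨H f, Set.mem_image_of_mem _ hfF, ?_⟩
      have hsubS : n '' A ⊆ {x ∈ X | g x ∈ H f x} := by
        rintro _ ⟨ξ, hξ, rfl⟩
        exact ⟨hnX ξ, ξ, hnle ξ, hξ⟩
      have himg : θ ≤ #(n '' A) := by
        by_contra hcon
        rw [not_le] at hcon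
        have hcover : A ⊆ ⋃ x : n '' A, {ξ ∈ A | n ξ = x.1} := by
          intro ξ hξ
          exact Set.mem_iUnion.2 ⟨⟨n ξ, Set.mem_image_of_mem n hξ⟩, hξ, rfl⟩
        have hsmall : ∀ x : ↥(n '' A), #{ξ ∈ A | n ξ = x.1} < θ := by
          intro x
          refine lt_of_le_of_lt (Cardinal.mk_le_mk_of_subset ?_) (my_mk_Iic_lt θ hθ x.1)
          rintro ξ ⟨_, hξx⟩
          exact hξx ▸ hnle ξ
        exact absurd ((Cardinal.mk_le_mk_of_subset hcover).trans_lt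
          (my_mk_union_lt θ hreg hcon hsmall)) (not_lt.2 hfA)
      refine le_antisymm ?_ (himg.trans (Cardinal.mk_le_mk_of_subset hsubS))
      exact (Cardinal.mk_le_mk_of_subset fun x hx => hx.1).trans_eq hX
  · -- bnum ≤ meetNum4
    refine le_csInf hS₁ne ?_
    rintro c ⟨ℋ, hc, hsmall, hcov⟩
    have hTne : Nonempty θ.ord.ToType :=
      Ordinal.nonempty_toType_iff.2 hreg.ord_pos.ne'
    obtain ⟨bound, hbound⟩ : ∃ b : Set θ.ord.ToType → θ.ord.ToType,
        ∀ s : Set θ.ord.ToType, #s < θ → ∀ y ∈ s, y < b s :=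
      ⟨fun s => if hs : #s < θ then (my_exists_strict_bound θ hθ hreg s hs).choose
        else Classical.arbitrary _,
       fun s hs => by
        simp only [dif_pos hs]
        exact (my_exists_strict_bound θ hθ hreg s hs).choose_spec⟩
    refine le_trans (le_trans (csInf_le' ⟨(fun h ξ => bound (h ξ)) '' ℋ, rfl, ?_⟩)
      Cardinal.mk_image_le) hc.le
    intro g
    obtain ⟨h, hhℋ, hh⟩ := hcov Set.univ (by rw [Cardinal.mk_univ, hT]) g
    refine ⟨_, Set.mem_image_of_mem _ hhℋ, ?_⟩
    refine le_trans (le_of_eq hh.symm) (Cardinal.mk_le_mk_of_subset ?_)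
    rintro ξ ⟨-, hgξ⟩
    exact (hbound (h ξ) (hsmall h hhℋ ξ) _ hgξ).le

/-- For every infinite regular cardinal `θ`, `m(θ,θ,θ,θ) = 𝔟_θ`. -/
theorem meetNum4_eq_bnum (θ : Cardinal) (hθ : ℵ₀ ≤ θ) (hreg : θ.IsRegular) :
    meetNum4 θ θ θ θ = bnum θ := by
  unfold meetNum4 bnum
  exact meetNum4_eq_bnum' θ hθ hreg

end
end

section
/- For infinite regular θ < λ and χ either 2 or an infinite cardinal, m(λ,λ,θ,χ) ≤ max{ m(θ,θ,θ,χ), m(θ,λ) }. -/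
open Cardinal Set

noncomputable section

universe u


private theorem meetNum4_le_max_aux (θ lam χ : Cardinal.{u})
    (hθ : ℵ₀ ≤ θ) (hreg : θ.IsRegular) (hlt : θ < lam)
    (hχ : χ = 2 ∨ ℵ₀ ≤ χ) :
    (sInf { c | ∃ ℋ : Set (lam.ord.ToType → Set lam.ord.ToType), #ℋ = c ∧
      (∀ h ∈ ℋ, ∀ ξ, #(h ξ) < χ) ∧
      ∀ X : Set lam.ord.ToType, #X = θ →
        ∀ g : lam.ord.ToType → lam.ord.ToType,
          ∃ h ∈ ℋ, #{ξ ∈ X | g ξ ∈ h ξ} = θ }) ≤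
    max (sInf { c | ∃ ℋ : Set (θ.ord.ToType → Set θ.ord.ToType), #ℋ = c ∧
      (∀ h ∈ ℋ, ∀ ξ, #(h ξ) < χ) ∧
      ∀ X : Set θ.ord.ToType, #X = θ →
        ∀ g : θ.ord.ToType → θ.ord.ToType,
          ∃ h ∈ ℋ, #{ξ ∈ X | g ξ ∈ h ξ} = θ })
      (sInf { c | ∃ 𝒴 : Set (Set lam.ord.ToType), #𝒴 = c ∧
        (∀ Y ∈ 𝒴, #Y = θ) ∧
        ∀ X : Set lam.ord.ToType, #X = θ → ∃ Y ∈ 𝒴, #(X ∩ Y : Set _) = θ }) := by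
  classical
  have hχ1 : (1 : Cardinal) < χ := by
    rcases hχ with h | h
    · rw [h]; exact one_lt_two
    · exact one_lt_aleph0.trans_le h
  have hχ0 : (0 : Cardinal) < χ := zero_lt_one.trans hχ1
  have mkΛ : #lam.ord.ToType = lam := by simp
  have mkΘ : #θ.ord.ToType = θ := by simp
  have hθ0 : (0 : Cardinal) < θ := aleph0_pos.trans_le hθ
  haveI : Nonempty θ.ord.ToType := mk_ne_zero_iff.mp (by rw [mkΘ]; exact hθ0.ne')
  -- obtain witnesses
  have hne1 : { c | ∃ ℋ : Set (θ.ord.ToType → Set θ.ord.ToType), #ℋ = c ∧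
      (∀ h ∈ ℋ, ∀ ξ, #(h ξ) < χ) ∧
      ∀ X : Set θ.ord.ToType, #X = θ →
        ∀ g : θ.ord.ToType → θ.ord.ToType,
          ∃ h ∈ ℋ, #{ξ ∈ X | g ξ ∈ h ξ} = θ }.Nonempty :=
    ⟨_, {h : θ.ord.ToType → Set θ.ord.ToType | ∀ ξ, #(h ξ) < χ}, rfl, fun h hh => hh,
      fun X hX g => ⟨fun ξ => {g ξ}, fun ξ => by rw [mk_singleton]; exact hχ1, by
        have : {ξ ∈ X | g ξ ∈ ({g ξ} : Set _)} = X := by ext ξ; simp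
        rw [this, hX]⟩⟩
  have hne2 : { c | ∃ 𝒴 : Set (Set lam.ord.ToType), #𝒴 = c ∧
      (∀ Y ∈ 𝒴, #Y = θ) ∧
      ∀ X : Set lam.ord.ToType, #X = θ → ∃ Y ∈ 𝒴, #(X ∩ Y : Set _) = θ }.Nonempty :=
    ⟨_, {Y : Set lam.ord.ToType | #Y = θ}, rfl, fun Y hY => hY,
      fun X hX => ⟨X, hX, by rw [inter_self]; exact hX⟩⟩
  obtain ⟨ℋ, hHcard, hHsmall, hHmeet⟩ := csInf_mem hne1
  obtain ⟨𝒴, hYcard, hYsize, hYmeet⟩ := csInf_mem hne2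
  rw [← hHcard, ← hYcard]
  -- lam ≤ #𝒴
  have hYlam : lam ≤ #𝒴 := by
    by_contra hcon
    push_neg at hcon
    have hUcomp : #(↥(⋃₀ 𝒴)ᶜ) < θ := by
      by_contra hge
      push_neg at hge
      obtain ⟨p, hp⟩ := le_mk_iff_exists_set.mp hge
      have hXcard : #(((↑) : ↥(⋃₀ 𝒴)ᶜ → lam.ord.ToType) '' p) = θ := by
        rw [mk_image_eq_of_injOn _ _ Subtype.coe_injective.injOn]; exact hp
      obtain ⟨Y, hY, hXY⟩ := hYmeet _ hXcard
      have hdis : ((((↑) : ↥(⋃₀ 𝒴)ᶜ → lam.ord.ToType) '' p) ∩ Y : Set lam.ord.ToType) = ∅ := by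
        ext ξ
        simp only [mem_inter_iff, mem_empty_iff_false, iff_false, not_and]
        rintro ⟨x, _, rfl⟩ hξY
        exact x.2 (mem_sUnion.mpr ⟨Y, hY, hξY⟩)
      rw [hdis, mk_emptyCollection] at hXY
      exact hθ0.ne hXY
    have hU : #(↥(⋃₀ 𝒴)) ≤ #𝒴 * θ := by
      rw [sUnion_eq_iUnion]
      refine mk_iUnion_le_sum_mk.trans ?_
      have hconst : (sum fun Y : ↥𝒴 => #(Y : Set lam.ord.ToType)) = sum fun _ : ↥𝒴 => θ := by
        congr 1; ext Y; exact hYsize Y Y.2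
      rw [hconst, sum_const']
    have hlam0 : ℵ₀ < lam := hθ.trans_lt hlt
    have h1 : #(↥(⋃₀ 𝒴)) < lam := by
      refine hU.trans_lt ((mul_le_max _ _).trans_lt ?_)
      exact max_lt (max_lt hcon hlt) hlam0
    have := add_lt_of_lt hlam0.le h1 (hUcomp.trans hlt)
    rw [mk_sum_compl, mkΛ] at this
    exact lt_irrefl _ this
  -- equivalences
  have hmkY : ∀ Y : ↥𝒴, #θ.ord.ToType = #(Y : Set lam.ord.ToType) := fun Y => by
    rw [mkΘ, hYsize Y Y.2]
  let e : ∀ Y : ↥𝒴, θ.ord.ToType ≃ ↥(Y : Set lam.ord.ToType) := fun Y =>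
    Classical.choice (Cardinal.eq.mp (hmkY Y))
  let F : ↥ℋ × ↥𝒴 × ↥𝒴 → (lam.ord.ToType → Set lam.ord.ToType) := fun p ξ =>
    if hξ : ξ ∈ (p.2.1 : Set lam.ord.ToType) then
      (fun β => ((e p.2.2 β : ↥(p.2.2 : Set lam.ord.ToType)) : lam.ord.ToType)) ''
        (p.1.1 ((e p.2.1).symm ⟨ξ, hξ⟩))
    else ∅
  let C : lam.ord.ToType → (lam.ord.ToType → Set lam.ord.ToType) := fun γ _ => {γ}
  refine le_trans (csInf_le' ⟨range F ∪ range C, rfl, ?_, ?_⟩) ?_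
  · -- smallness
    rintro h' (⟨p, rfl⟩ | ⟨γ, rfl⟩) ξ
    · simp only [F]
      split
      · exact mk_image_le.trans_lt (hHsmall p.1.1 p.1.2 _)
      · rw [mk_emptyCollection]; exact hχ0
    · simp only [C, mk_singleton]; exact hχ1
  · -- meeting property
    intro X hX g
    by_cases hc : ∃ γ, θ ≤ #{ξ | ξ ∈ X ∧ g ξ = γ}
    · obtain ⟨γ, hγ⟩ := hc
      refine ⟨C γ, Or.inr ⟨γ, rfl⟩, ?_⟩
      have he : {ξ ∈ X | g ξ ∈ C γ ξ} = {ξ | ξ ∈ X ∧ g ξ = γ} := by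
        ext ξ; simp [C]
      rw [he]
      exact le_antisymm (hX ▸ mk_le_mk_of_subset (fun ξ hξ => hξ.1)) hγ
    · push_neg at hc
      have himg : #(g '' X) = θ := by
        refine le_antisymm (mk_image_le.trans hX.le) ?_
        by_contra hlt'
        push_neg at hlt'
        have hsub : X ⊆ ⋃ γ : ↥(g '' X), {ξ | ξ ∈ X ∧ g ξ = ↑γ} := fun ξ hξ =>
          mem_iUnion.mpr ⟨⟨g ξ, mem_image_of_mem g hξ⟩, hξ, rfl⟩
        have hle := (mk_le_mk_of_subset hsub).trans mk_iUnion_le_sum_mk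
        rw [hX] at hle
        exact absurd (hle.trans_lt (sum_lt_of_isRegular hreg hlt' fun γ => hc ↑γ))
          (lt_irrefl θ)
      have hex : ∀ γ : ↥(g '' X), ∃ x, x ∈ X ∧ g x = ↑γ := fun γ => γ.2
      choose s hsX hsg using hex
      have hsinj : Function.Injective s := fun γ₁ γ₂ hss =>
        Subtype.ext (by rw [← hsg γ₁, ← hsg γ₂, hss])
      have hrange : #(range s) = θ := by rw [mk_range_eq s hsinj]; exact himg
      obtain ⟨Y, hY, hXY⟩ := hYmeet (range s) hrange
      have hgInj : InjOn g (range s) := by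
        rintro a ⟨γ₁, rfl⟩ b ⟨γ₂, rfl⟩ hab
        rw [hsg γ₁, hsg γ₂] at hab
        exact congrArg s (Subtype.ext hab)
      set X₀ := range s ∩ Y with hX₀def
      have hX₀X : X₀ ⊆ X := fun ξ hξ => by obtain ⟨γ, rfl⟩ := hξ.1; exact hsX γ
      have hgX₀ : #(g '' X₀) = θ := by
        rw [mk_image_eq_of_injOn g X₀ (hgInj.mono inter_subset_left)]; exact hXY
      obtain ⟨Z, hZ, hZcard⟩ := hYmeet (g '' X₀) hgX₀
      set X₁ := X₀ ∩ g ⁻¹' Z with hX₁def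
      have hgX₁ : g '' X₁ = g '' X₀ ∩ Z := image_inter_preimage g X₀ Z
      have hX₁card : #X₁ = θ := by
        rw [← mk_image_eq_of_injOn g X₁ (hgInj.mono (inter_subset_left.trans inter_subset_left)),
          hgX₁]
        exact hZcard
      let eY := e ⟨Y, hY⟩
      let eZ := e ⟨Z, hZ⟩
      let cY : θ.ord.ToType → lam.ord.ToType := fun α => ↑(eY α)
      have hcYinj : Function.Injective cY := fun a b hab => eY.injective (Subtype.ext hab)
      have hrangecY : range cY = Y := by
        have h2 : range cY = range (Subtype.val : ↥Y → _) := eY.surjective.range_comp _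
        rw [h2, Subtype.range_coe]
      have hX₁Y : X₁ ⊆ Y := inter_subset_left.trans inter_subset_right
      have hA : #(cY ⁻¹' X₁) = θ := by
        rw [mk_preimage_of_injective_of_subset_range cY X₁ hcYinj
          (by rw [hrangecY]; exact hX₁Y)]
        exact hX₁card
      let g' : θ.ord.ToType → θ.ord.ToType := fun α =>
        if hz : g (cY α) ∈ Z then eZ.symm ⟨g (cY α), hz⟩ else Classical.arbitrary _
      obtain ⟨h, hh, hB⟩ := hHmeet (cY ⁻¹' X₁) hA g'
      refine ⟨F ⟨⟨h, hh⟩, ⟨Y, hY⟩, ⟨Z, hZ⟩⟩, Or.inl ⟨_, rfl⟩, ?_⟩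
      have hsub2 : cY '' {α | α ∈ cY ⁻¹' X₁ ∧ g' α ∈ h α} ⊆
          {ξ | ξ ∈ X ∧ g ξ ∈ F ⟨⟨h, hh⟩, ⟨Y, hY⟩, ⟨Z, hZ⟩⟩ ξ} := by
        rintro ξ ⟨α, ⟨hαA, hαh⟩, rfl⟩
        have hξ1 : cY α ∈ X₁ := hαA
        have hξY : cY α ∈ Y := hX₁Y hξ1
        have hξZ : g (cY α) ∈ Z := hξ1.2
        refine ⟨hX₀X hξ1.1, ?_⟩
        simp only [F]
        rw [dif_pos hξY]
        have hsym : (eY).symm ⟨cY α, hξY⟩ = α := by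
          have h3 : (⟨cY α, hξY⟩ : ↥Y) = eY α := Subtype.ext rfl
          rw [h3, Equiv.symm_apply_apply]
        rw [hsym]
        refine ⟨g' α, hαh, ?_⟩
        show ((eZ (g' α) : ↥Z) : lam.ord.ToType) = g (cY α)
        have h4 : g' α = eZ.symm ⟨g (cY α), hξZ⟩ := by simp only [g']; rw [dif_pos hξZ]
        rw [h4, Equiv.apply_symm_apply]
      refine le_antisymm ((mk_le_mk_of_subset fun ξ hξ => hξ.1).trans hX.le) ?_
      calc θ = #{α | α ∈ cY ⁻¹' X₁ ∧ g' α ∈ h α} := hB.symm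
        _ = #(cY '' {α | α ∈ cY ⁻¹' X₁ ∧ g' α ∈ h α}) :=
          (mk_image_eq_of_injOn cY _ hcYinj.injOn).symm
        _ ≤ _ := mk_le_mk_of_subset hsub2
  · have hM : ℵ₀ ≤ max #ℋ #𝒴 := le_max_of_le_right ((hθ.trans hlt.le).trans hYlam)
    refine (mk_union_le _ _).trans (add_le_of_le hM ?_ ?_)
    · refine mk_range_le.trans ?_
      have hp : #(↥ℋ × ↥𝒴 × ↥𝒴) = #ℋ * (#𝒴 * #𝒴) := by simp [mk_prod]
      rw [hp]
      calc #ℋ * (#𝒴 * #𝒴) ≤ (max #ℋ #𝒴) * ((max #ℋ #𝒴) * (max #ℋ #𝒴)) := by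
            gcongr
            · exact le_max_left _ _
            · exact le_max_right _ _
            · exact le_max_right _ _
        _ = max #ℋ #𝒴 := by rw [mul_eq_self hM, mul_eq_self hM]
    · refine mk_range_le.trans ?_
      rw [mkΛ]
      exact hYlam.trans (le_max_right _ _)

/-- For infinite regular `θ < λ` and `χ` either `2` or infinite,
`m(λ,λ,θ,χ) ≤ max { m(θ,θ,θ,χ), m(θ,λ) }`. -/
theorem meetNum4_le_max (θ lam χ : Cardinal)
    (hθ : ℵ₀ ≤ θ) (hreg : θ.IsRegular) (hlt : θ < lam)
    (hχ : χ = 2 ∨ ℵ₀ ≤ χ) :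
    meetNum4 lam lam θ χ ≤ max (meetNum4 θ θ θ χ) (meetNum θ lam) := by
  unfold meetNum4 meetNum
  exact meetNum4_le_max_aux θ lam χ hθ hreg hlt hχ

end
end

section
/- For infinite regular θ < λ and χ either 2 or an infinite cardinal, m(θ,θ,θ,χ) ≤ m(λ,λ,θ,χ). -/
open Cardinal Set

noncomputable section

/-- For infinite regular `θ < λ` and `χ` either `2` or infinite,
`m(θ,θ,θ,χ) ≤ m(λ,λ,θ,χ)`. -/
theorem meetNum4_mono (θ lam χ : Cardinal)
    (hθ : ℵ₀ ≤ θ) (hreg : θ.IsRegular) (hlt : θ < lam)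
    (hχ : χ = 2 ∨ ℵ₀ ≤ χ) :
    meetNum4 θ θ θ χ ≤ meetNum4 lam lam θ χ := by
  classical
  have hA : #θ.ord.ToType = θ := mk_ord_toType θ
  have hB : #lam.ord.ToType = lam := mk_ord_toType lam
  have hAne : Nonempty θ.ord.ToType := by
    rw [← mk_ne_zero_iff, hA]
    exact (aleph0_pos.trans_le hθ).ne'
  obtain ⟨i⟩ : Nonempty (θ.ord.ToType ↪ lam.ord.ToType) := by
    rw [← le_def, hA, hB]; exact hlt.le
  have hone : (1 : Cardinal) < χ := by
    rcases hχ with h2 | h2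
    · rw [h2]; exact one_lt_two
    · exact lt_of_lt_of_le one_lt_aleph0 h2
  -- The defining set for `meetNum4 lam lam θ χ` is nonempty.
  have hne : { c | ∃ ℋ : Set (lam.ord.ToType → Set lam.ord.ToType), #ℋ = c ∧
      (∀ h ∈ ℋ, ∀ ξ, #(h ξ) < χ) ∧
      ∀ X : Set lam.ord.ToType, #X = θ →
        ∀ g : lam.ord.ToType → lam.ord.ToType,
          ∃ h ∈ ℋ, #{ξ ∈ X | g ξ ∈ h ξ} = θ }.Nonempty := by
    refine ⟨_, Set.range (fun (g : lam.ord.ToType → lam.ord.ToType) ξ =>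
      ({g ξ} : Set lam.ord.ToType)), rfl, ?_, ?_⟩
    · rintro h ⟨g, rfl⟩ ξ
      simpa using hone
    · intro X hX g
      refine ⟨_, ⟨g, rfl⟩, ?_⟩
      simpa using hX
  obtain ⟨ℋ, hHc, hHsmall, hHcov⟩ := csInf_mem hne
  -- pull back along `i`
  set P : (lam.ord.ToType → Set lam.ord.ToType) → (θ.ord.ToType → Set θ.ord.ToType) :=
    fun h ξ => i ⁻¹' (h (i ξ)) with hP
  have key : meetNum4 θ θ θ χ ≤ #(P '' ℋ) := by
    refine csInf_le' ⟨P '' ℋ, rfl, ?_, ?_⟩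
    · rintro h' ⟨h, hh, rfl⟩ ξ
      exact lt_of_le_of_lt (mk_preimage_of_injective i _ i.injective) (hHsmall h hh (i ξ))
    · intro X hX g
      set g' : lam.ord.ToType → lam.ord.ToType :=
        fun η => i (g (Function.invFun i η)) with hg'
      have hX' : #(i '' X) = θ := by rw [mk_image_eq i.injective]; exact hX
      obtain ⟨h, hh, hcard⟩ := hHcov (i '' X) hX' g'
      refine ⟨P h, ⟨h, hh, rfl⟩, ?_⟩
      have himg : i '' {ξ ∈ X | g ξ ∈ P h ξ} = {η ∈ i '' X | g' η ∈ h η} := by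
        ext η
        constructor
        · rintro ⟨ξ, ⟨hξX, hξ⟩, rfl⟩
          refine ⟨⟨ξ, hξX, rfl⟩, ?_⟩
          show i (g (Function.invFun i (i ξ))) ∈ h (i ξ)
          rw [Function.leftInverse_invFun i.injective ξ]
          exact hξ
        · rintro ⟨⟨ξ, hξX, rfl⟩, hg⟩
          refine ⟨ξ, ⟨hξX, ?_⟩, rfl⟩
          have hg2 : i (g (Function.invFun i (i ξ))) ∈ h (i ξ) := hg
          rw [Function.leftInverse_invFun i.injective ξ] at hg2
          exact hg2
      rw [← mk_image_eq (f := i) i.injective, himg]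
      exact hcard
  calc meetNum4 θ θ θ χ ≤ #(P '' ℋ) := key
    _ ≤ #ℋ := mk_image_le
    _ = meetNum4 lam lam θ χ := hHc

end
end

section
/- Suppose λ is an infinite cardinal, χ < λ is either 2 or an infinite cardinal, and α is an ordinal with λ < α < λ⁺ and cf(α) = cf(λ). Then there is NO sequence of functions ⟨f_i : α → [λ]^{<χ} : i < α⟩ such that for every function f : α → λ and every cofinal subset B ⊆ α, there exists i < α with sup{β ∈ B : f(β) ∈ f_i(β)} = α. -/
open Cardinal Set

noncomputable section

/-- Auxiliary: if `cf(o) = cf(lam.ord)` and both are limit, there is a map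
`u : o.ToType → lam.ord.ToType` tending to infinity. -/
theorem tendsto_aux_no_witness (lam : Cardinal) (o : Ordinal)
    (hlimL : Order.IsSuccLimit lam.ord) (hlimo : Order.IsSuccLimit o) (hcof : o.cof = lam.ord.cof) :
    ∃ u : o.ToType → lam.ord.ToType, ∀ y : lam.ord.ToType,
      ∃ x : o.ToType, ∀ β : o.ToType, x ≤ β → y < u β := by
  obtain ⟨b, hb⟩ := Ordinal.exists_fundamental_sequence o
  obtain ⟨c, hc⟩ := Ordinal.exists_fundamental_sequence lam.ord
  have hκ : o.cof.ord = lam.ord.cof.ord := by rw [hcof]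
  set eT := Ordinal.ToType.mk (o := o) with heT
  set eL := Ordinal.ToType.mk (o := lam.ord) with heL
  -- least stage `J β` with `βo < b (J β)`
  have hJex : ∀ β : o.ToType, ∃ j, ∃ h : j < o.cof.ord,
      ((eT.symm β : Set.Iio o) : Ordinal) < b j h ∧
      ∀ j' (h' : j' < o.cof.ord), ((eT.symm β : Set.Iio o) : Ordinal) < b j' h' → j ≤ j' := by
    intro β
    set S : Set Ordinal :=
      {j | ∃ h : j < o.cof.ord, ((eT.symm β : Set.Iio o) : Ordinal) < b j h} with hS
    have hne : S.Nonempty := by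
      have hβ : ((eT.symm β : Set.Iio o) : Ordinal) < o := (eT.symm β).2
      have h1 : Order.succ ((eT.symm β : Set.Iio o) : Ordinal) < o := hlimo.succ_lt hβ
      obtain ⟨j, hj, hle⟩ := Ordinal.lt_blsub_iff.1 (h1.trans_le hb.blsub_eq.ge)
      exact ⟨j, hj, (Order.lt_succ _).trans_le hle⟩
    obtain ⟨h, hh⟩ := csInf_mem hne
    exact ⟨sInf S, h, hh, fun j' h' hj' => csInf_le (OrderBot.bddBelow S) ⟨h', hj'⟩⟩
  choose J hJκ hJlt hJmin using hJex
  have hJκ' : ∀ β, J β < lam.ord.cof.ord := fun β => hκ ▸ hJκ β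
  have hclt : ∀ β, c (J β) (hJκ' β) < lam.ord := fun β =>
    hc.blsub_eq ▸ Ordinal.lt_blsub _ _ _
  refine ⟨fun β => eL ⟨c (J β) (hJκ' β), hclt β⟩, ?_⟩
  intro y
  have hy : ((eL.symm y : Set.Iio lam.ord) : Ordinal) < lam.ord := (eL.symm y).2
  have h1 : Order.succ ((eL.symm y : Set.Iio lam.ord) : Ordinal) < lam.ord := hlimL.succ_lt hy
  obtain ⟨j0, hj0, hle⟩ := Ordinal.lt_blsub_iff.1 (h1.trans_le hc.blsub_eq.ge)
  have hyc : ((eL.symm y : Set.Iio lam.ord) : Ordinal) < c j0 hj0 :=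
    (Order.lt_succ _).trans_le hle
  have hj0' : j0 < o.cof.ord := by rw [hκ]; exact hj0
  have hbo : b j0 hj0' < o := hb.blsub_eq ▸ Ordinal.lt_blsub _ _ _
  have hbo' : Order.succ (b j0 hj0') < o := hlimo.succ_lt hbo
  refine ⟨eT ⟨Order.succ (b j0 hj0'), hbo'⟩, fun β hβ => ?_⟩
  have hββ : Order.succ (b j0 hj0') ≤ ((eT.symm β : Set.Iio o) : Ordinal) := by
    have h2 := eT.symm.le_iff_le.2 hβ
    rw [OrderIso.symm_apply_apply] at h2
    exact h2
  have hblt : b j0 hj0' < ((eT.symm β : Set.Iio o) : Ordinal) :=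
    (Order.lt_succ _).trans_le hββ
  have hj0J : j0 < J β := by
    by_contra hcon
    push_neg at hcon
    exact absurd (hJlt β) (not_lt.2 ((hb.monotone (hJκ β) hj0' hcon).trans hblt.le))
  have hcc : c j0 hj0 < c (J β) (hJκ' β) := hc.2.1 _ _ hj0J
  have : eL.symm y < (⟨c (J β) (hJκ' β), hclt β⟩ : Set.Iio lam.ord) :=
    Subtype.mk_lt_mk.2 (hyc.trans hcc)
  have h3 := eL.lt_iff_lt.2 this
  rwa [OrderIso.apply_symm_apply] at h3

/-- Suppose `λ` is an infinite cardinal, `χ < λ` is either `2` or infinite, and `α` is an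
ordinal with `λ < α < λ⁺` and `cf(α) = cf(λ)`.  Then there is no sequence of functions
`⟨f_i : α → [λ]^{<χ} | i < α⟩` such that for every function `f : α → λ` and every cofinal
`B ⊆ α` there exists `i < α` with `sup {β ∈ B | f β ∈ f_i β} = α`. -/
theorem no_witnessing_sequence_at_cof_lam (lam χ : Cardinal) (o : Ordinal)
    (hlam : ℵ₀ ≤ lam) (hχ : χ = 2 ∨ ℵ₀ ≤ χ) (hχlam : χ < lam)
    (h1 : lam.ord < o) (h2 : o < (Order.succ lam).ord)
    (hcof : o.cof = lam.ord.cof) :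
    ¬ ∃ F : o.ToType → o.ToType → Set lam.ord.ToType,
        (∀ i β, #(F i β) < χ) ∧
        ∀ f : o.ToType → lam.ord.ToType, ∀ B : Set o.ToType,
          (∀ x, ∃ b ∈ B, x ≤ b) →
          ∃ i, ∀ x, ∃ β ∈ B, x ≤ β ∧ f β ∈ F i β := by
  rintro ⟨F, hFsmall, hF⟩
  have hlimL : Order.IsSuccLimit lam.ord := Cardinal.isSuccLimit_ord hlam
  have hlimo : Order.IsSuccLimit o := by
    rw [← Ordinal.aleph0_le_cof, hcof, Ordinal.aleph0_le_cof]
    exact hlimL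
  have hcard : o.card = lam :=
    le_antisymm (Order.lt_succ_iff.1 (Cardinal.lt_ord.1 h2)) (Cardinal.ord_le.1 h1.le)
  obtain ⟨φ⟩ := Cardinal.eq.1 (show #o.ToType = #lam.ord.ToType by
    rw [Cardinal.mk_toType, Cardinal.mk_toType, Cardinal.card_ord, hcard])
  obtain ⟨u, hu⟩ := tendsto_aux_no_witness lam o hlimL hlimo hcof
  -- for each β the forbidden set is small, so we may avoid it
  have hU : ∀ β : o.ToType, ∃ z : lam.ord.ToType,
      z ∉ ⋃ i ∈ {i : o.ToType | φ i < u β}, F i β := by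
    intro β
    have hsmall : #(⋃ i ∈ {i : o.ToType | φ i < u β}, F i β) < lam := by
      refine lt_of_le_of_lt (Cardinal.mk_biUnion_le _ _) ?_
      refine Cardinal.mul_lt_of_lt hlam ?_ ((csSup_le' ?_).trans_lt hχlam)
      · have hpre : {i : o.ToType | φ i < u β} = φ ⁻¹' (Set.Iio (u β)) := rfl
        rw [hpre]
        exact (Cardinal.mk_preimage_of_injective φ _ φ.injective).trans_lt
          (Cardinal.mk_Iio_ord_toType (u β))
      · rintro w ⟨x, rfl⟩
        exact (hFsmall _ _).le
    by_contra hcon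
    push_neg at hcon
    have huniv : (⋃ i ∈ {i : o.ToType | φ i < u β}, F i β) = Set.univ :=
      Set.eq_univ_of_forall hcon
    rw [huniv, Cardinal.mk_univ, Cardinal.mk_ord_toType] at hsmall
    exact absurd hsmall (lt_irrefl _)
  choose f hf using hU
  obtain ⟨i, hi⟩ := hF f Set.univ (fun x => ⟨x, Set.mem_univ x, le_rfl⟩)
  -- pick z above φ i
  have : NoMaxOrder lam.ord.ToType :=
    Ordinal.toType_noMax_of_succ_lt (fun a ha => hlimL.succ_lt ha)
  obtain ⟨z, hz⟩ := exists_gt (φ i)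
  obtain ⟨x, hx⟩ := hu z
  obtain ⟨β, -, hxβ, hmem⟩ := hi x
  have hiG : i ∈ {i : o.ToType | φ i < u β} := hz.trans (hx β hxβ)
  exact hf β (Set.mem_biUnion hiG hmem)

end
end

section
/- Suppose θ is an infinite regular cardinal, λ a cardinal with θ < λ, and α is an ordinal with λ < α < λ⁺ and cf(α) = θ. If there exists a sequence of functions ⟨f_i : α → [λ]^{<χ} : i < α⟩ such that for every function f : α → λ and every cofinal B ⊆ α there is i < α with {β ∈ B : f(β) ∈ f_i(β)} cofinal in α, then m(θ,λ,θ,χ) ≤ λ. -/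
open Cardinal Set

noncomputable section

/-- Suppose `θ` is infinite regular, `θ < λ`, and `α` is an ordinal with `λ < α < λ⁺` and
`cf(α) = θ`.  If there exists a sequence `⟨f_i : α → [λ]^{<χ} | i < α⟩` such that for every
`f : α → λ` and every cofinal `B ⊆ α` there is `i < α` with `{β ∈ B | f β ∈ f_i β}` cofinal
in `α`, then `m(θ,λ,θ,χ) ≤ λ`. -/
theorem meetNum4_le_of_witnessing_sequence (θ lam χ : Cardinal) (o : Ordinal)
    (hθ : ℵ₀ ≤ θ) (hreg : θ.IsRegular) (hθlam : θ < lam) (hχ : χ = 2 ∨ ℵ₀ ≤ χ)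
    (h1 : lam.ord < o) (h2 : o < (Order.succ lam).ord) (hcof : o.cof = θ)
    (hex : ∃ F : o.ToType → o.ToType → Set lam.ord.ToType,
        (∀ i β, #(F i β) < χ) ∧
        ∀ f : o.ToType → lam.ord.ToType, ∀ B : Set o.ToType,
          (∀ x, ∃ b ∈ B, x ≤ b) →
          ∃ i, ∀ x, ∃ β ∈ B, x ≤ β ∧ f β ∈ F i β) :
    meetNum4 θ lam θ χ ≤ lam := by
  haveI : IsWellOrder o.ToType (· < ·) := isWellOrder_lt
  haveI : IsWellOrder θ.ord.ToType (· < ·) := isWellOrder_lt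
  obtain ⟨F, hFsmall, hF⟩ := hex
  have hlam0 : lam ≠ 0 := by
    rintro rfl
    exact (Cardinal.zero_le θ).not_gt hθlam
  have hlamne : Nonempty lam.ord.ToType := by
    rw [Ordinal.nonempty_toType_iff]
    intro h
    exact hlam0 (Cardinal.ord_eq_zero.mp h)
  -- get a strictly monotone cofinal map π : θ.ord.ToType → o.ToType
  obtain ⟨S, hSunb, hStype⟩ := Ordinal.exists_ord_cof_eq o.ToType
  rw [Ordinal.cof_toType, hcof] at hStype
  haveI : IsWellOrder (Subtype S) (Subrel ((· < ·) : o.ToType → o.ToType → Prop) S) :=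
    (isWellOrder_lt : IsWellOrder S (· < ·))
  have htype : Ordinal.type ((· < ·) : θ.ord.ToType → θ.ord.ToType → Prop)
      = Ordinal.type (Subrel ((· < ·) : o.ToType → o.ToType → Prop) S) := by
    rw [Ordinal.type_toType, ← hStype]
    rfl
  obtain ⟨e⟩ := Ordinal.type_eq.mp htype
  set π : θ.ord.ToType → o.ToType := fun ξ => (e ξ).1 with hπ
  have hπmono : StrictMono π := fun a b hab => e.map_rel_iff.mpr hab
  have hπunb : ∀ x : o.ToType, x ∈ S → ∃ ξ, π ξ = x := fun x hx =>
    ⟨e.symm ⟨x, hx⟩, by simp [hπ]⟩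
  -- any subset of θ.ord.ToType of size θ is unbounded
  have hXunb : ∀ X : Set θ.ord.ToType, #X = θ → ∀ x, ∃ y ∈ X, x ≤ y := by
    intro X hX x
    by_contra hcon
    push_neg at hcon
    have hsub : X ⊆ Iio x := fun y hy => (hcon y hy)
    have hle : #X ≤ #(Iio x) := mk_le_mk_of_subset hsub
    have hlt : #(Iio x) < θ := Cardinal.mk_Iio_ord_toType x
    rw [hX] at hle
    exact absurd (hle.trans_lt hlt) (lt_irrefl θ)
  -- any unbounded subset of θ.ord.ToType has size θ
  have hunbcard : ∀ Y : Set θ.ord.ToType, (∀ x, ∃ y ∈ Y, x ≤ y) → #Y = θ := by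
    intro Y hY
    apply le_antisymm
    · calc #Y ≤ #θ.ord.ToType := mk_le_mk_of_subset (subset_univ Y) |>.trans (by simp)
        _ = θ := by rw [Cardinal.mk_toType, Cardinal.card_ord]
    · have hco : Ordinal.cof (Ordinal.type ((· < ·) : θ.ord.ToType → _ → Prop)) ≤ #Y := by
        rw [Ordinal.cof_type]
        apply Order.cof_le
        intro x
        obtain ⟨y, hy, hxy⟩ := hY x
        exact ⟨y, hy, hxy⟩
      rwa [Ordinal.type_toType, hreg.cof_eq] at hco
  set ℋ : Set (θ.ord.ToType → Set lam.ord.ToType) := range (fun i => F i ∘ π) with hℋ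
  have hmem : #ℋ ∈ { c | ∃ ℋ : Set (θ.ord.ToType → Set lam.ord.ToType), #ℋ = c ∧
      (∀ h ∈ ℋ, ∀ ξ, #(h ξ) < χ) ∧
      ∀ X : Set θ.ord.ToType, #X = θ →
        ∀ g : θ.ord.ToType → lam.ord.ToType,
          ∃ h ∈ ℋ, #{ξ ∈ X | g ξ ∈ h ξ} = θ } := by
    refine ⟨ℋ, rfl, ?_, ?_⟩
    · rintro h ⟨i, rfl⟩ ξ
      exact hFsmall i (π ξ)
    · intro X hX g
      classical
      set f : o.ToType → lam.ord.ToType := fun β =>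
        if hb : ∃ ξ, π ξ = β then g hb.choose else Classical.arbitrary _ with hf
      have hfπ : ∀ ξ, f (π ξ) = g ξ := by
        intro ξ
        have hb : ∃ ξ', π ξ' = π ξ := ⟨ξ, rfl⟩
        have hc : hb.choose = ξ := hπmono.injective hb.choose_spec
        show (if hb2 : ∃ ξ', π ξ' = π ξ then g hb2.choose else _) = g ξ
        rw [dif_pos hb]
        exact congrArg g hc
      set B : Set o.ToType := π '' X with hB
      have hBunb : ∀ x, ∃ b ∈ B, x ≤ b := by
        intro x
        obtain ⟨s, hs, hxs⟩ := hSunb x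
        obtain ⟨ξ, rfl⟩ := hπunb s hs
        obtain ⟨y, hy, hξy⟩ := hXunb X hX ξ
        exact ⟨π y, mem_image_of_mem π hy, hxs.trans (hπmono.monotone hξy)⟩
      obtain ⟨i, hi⟩ := hF f B hBunb
      refine ⟨F i ∘ π, ⟨i, rfl⟩, ?_⟩
      apply hunbcard
      intro x
      obtain ⟨β, hβB, hxβ, hfβ⟩ := hi (π x)
      obtain ⟨ξ, hξX, rfl⟩ := hβB
      refine ⟨ξ, ⟨hξX, ?_⟩, (hπmono.le_iff_le).mp hxβ⟩
      rw [← hfπ ξ]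
      exact hfβ
  have hcard : #ℋ ≤ lam := by
    calc #ℋ ≤ #o.ToType := mk_range_le
      _ = o.card := Cardinal.mk_toType o
      _ ≤ lam := Order.lt_succ_iff.mp (Cardinal.lt_ord.mp h2)
  exact le_trans (csInf_le' hmem) hcard

end
end

section
/- If λ is a regular uncountable cardinal, then ADS_λ holds: there exists a sequence ⟨A_β : β < λ⁺⟩ of cofinal subsets of λ such that for every α < λ⁺ there is a function f_α : α → λ with ⟨A_β \ f_α(β) : β < α⟩ pairwise disjoint. -/
open Cardinal Set

noncomputable section

namespace AdsAux

variable {lam : Cardinal}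

lemma small_bounded (hreg : lam.IsRegular) (S : Set lam.ord.ToType) (hS : #S < lam) :
    ∃ b, ∀ x ∈ S, x < b := by
  letI : IsWellOrder lam.ord.ToType (· < ·) := isWellOrder_lt
  have h : #S < Ordinal.cof (Ordinal.type ((· < ·) : lam.ord.ToType → lam.ord.ToType → Prop)) := by
    rwa [Ordinal.type_toType, hreg.cof_eq]
  by_contra hc
  push_neg at hc
  rw [Ordinal.cof_type] at h
  exact (Order.cof_le (s := S) (fun a => by
    obtain ⟨x, hx, hle⟩ := hc a
    exact ⟨x, hx, hle⟩)).not_gt h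

lemma mk_toType_eq : #lam.ord.ToType = lam := by
  rw [Cardinal.mk_toType, Cardinal.card_ord]

/-- Any set of full size `lam` is cofinal. -/
lemma cofinal_of_mk (A : Set lam.ord.ToType) (hA : #A = lam) :
    ∀ x, ∃ y ∈ A, x ≤ y := by
  intro x
  by_contra h
  push_neg at h
  have hsub : A ⊆ Iio x := fun y hy => (h y hy)
  have hlt := (Cardinal.mk_le_mk_of_subset hsub).trans_lt (Cardinal.mk_Iio_ord_toType x)
  rw [hA] at hlt
  exact lt_irrefl _ hlt

lemma exists_diag (hreg : lam.IsRegular)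
    (γ : (Order.succ lam).ord.ToType)
    (G : ∀ β, β < γ → lam.ord.ToType → lam.ord.ToType) :
    ∃ g : lam.ord.ToType → lam.ord.ToType,
      ∀ β (h : β < γ), #{ξ | g ξ = G β h ξ} < lam := by
  classical
  have hcard : #(Iio γ) ≤ #lam.ord.ToType := by
    rw [mk_toType_eq]
    have := Cardinal.mk_Iio_ord_toType γ
    rwa [Order.lt_succ_iff] at this
  obtain ⟨e⟩ : Nonempty (Iio γ ↪ lam.ord.ToType) := Cardinal.le_def _ _ |>.1 hcard
  set E : lam.ord.ToType → Set lam.ord.ToType :=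
    fun ξ => {y | ∃ β : Iio γ, e β ≤ ξ ∧ y = G β.1 β.2 ξ} with hE
  have hEcard : ∀ ξ, #(E ξ) < lam := by
    intro ξ
    have hsub : E ξ ⊆ Set.range (fun p : {b : Iio γ // e b ≤ ξ} => G p.1.1 p.1.2 ξ) := by
      rintro y ⟨β, hle, rfl⟩
      exact ⟨⟨β, hle⟩, rfl⟩
    refine (Cardinal.mk_le_mk_of_subset hsub).trans_lt ?_
    refine Cardinal.mk_range_le.trans_lt ?_
    have h0 : #{b : Iio γ // e b ≤ ξ} ≤ #(Iic ξ) :=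
      Cardinal.mk_le_of_injective (f := fun p => (⟨e p.1, p.2⟩ : Iic ξ))
        (by rintro ⟨a, ha⟩ ⟨b, hb⟩ h
            simp only [Subtype.mk.injEq] at h
            exact Subtype.ext (e.injective (congrArg Subtype.val h)))
    refine h0.trans_lt ?_
    have h1 : #(Iic ξ) ≤ #(Iio ξ) + 1 := by
      have hins : (Iic ξ : Set _) ⊆ insert ξ (Iio ξ) := by
        intro y hy
        rcases eq_or_lt_of_le (mem_Iic.1 hy) with h | h
        · exact Or.inl h
        · exact Or.inr h
      exact (Cardinal.mk_le_mk_of_subset hins).trans Cardinal.mk_insert_le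
    refine h1.trans_lt ?_
    exact Cardinal.add_lt_of_lt hreg.aleph0_le (Cardinal.mk_Iio_ord_toType ξ)
      (lt_of_lt_of_le one_lt_aleph0 hreg.aleph0_le)
  have hpick : ∀ ξ, ∃ y, y ∉ E ξ := by
    intro ξ
    obtain ⟨b, hb⟩ := small_bounded hreg (E ξ) (hEcard ξ)
    exact ⟨b, fun hmem => lt_irrefl b (hb b hmem)⟩
  choose g hg using hpick
  refine ⟨g, ?_⟩
  intro β h
  have hsub : {ξ | g ξ = G β h ξ} ⊆ Iio (e ⟨β, h⟩) := by
    intro ξ hξ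
    by_contra hlt
    exact hg ξ ⟨⟨β, h⟩, not_lt.1 hlt, (hξ : g ξ = _)⟩
  exact (Cardinal.mk_le_mk_of_subset hsub).trans_lt (Cardinal.mk_Iio_ord_toType _)


/-- The almost-disjoint sequence of functions, by transfinite recursion. -/
def F (hreg : lam.IsRegular) : (Order.succ lam).ord.ToType → lam.ord.ToType → lam.ord.ToType :=
  (wellFoundedLT_toType ((Order.succ lam).ord)).wf.fix
    (fun γ IH => Classical.choose (exists_diag hreg γ IH))

lemma F_ad (hreg : lam.IsRegular) {β γ : (Order.succ lam).ord.ToType} (h : β < γ) :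
    #{ξ | F hreg γ ξ = F hreg β ξ} < lam := by
  have hfix : F hreg γ
      = Classical.choose (exists_diag hreg γ (fun β _ => F hreg β)) :=
    WellFounded.fix_eq _ _ _
  have hspec := Classical.choose_spec (exists_diag hreg γ (fun β _ => F hreg β)) β h
  rwa [← hfix] at hspec

lemma F_ad' (hreg : lam.IsRegular) {β γ : (Order.succ lam).ord.ToType} (h : β ≠ γ) :
    #{ξ | F hreg β ξ = F hreg γ ξ} < lam := by
  rcases lt_or_gt_of_ne h with hlt | hlt
  · have : {ξ | F hreg β ξ = F hreg γ ξ} = {ξ | F hreg γ ξ = F hreg β ξ} := by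
      ext ξ; exact ⟨Eq.symm, Eq.symm⟩
    rw [this]
    exact F_ad hreg hlt
  · exact F_ad hreg hlt

end AdsAux

open AdsAux

/-- If `λ` is a regular uncountable cardinal, then `ADS_λ` holds: there is a sequence
`⟨A_β | β < λ⁺⟩` of cofinal subsets of `λ` such that for every `α < λ⁺` there is
`f_α : α → λ` with `⟨A_β \ f_α(β) | β < α⟩` pairwise disjoint. -/
theorem ads_of_regular (lam : Cardinal) (hreg : lam.IsRegular) (hunc : ℵ₀ < lam) :
    ∃ A : (Order.succ lam).ord.ToType → Set lam.ord.ToType,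
      (∀ β, ∀ x, ∃ y ∈ A β, x ≤ y) ∧
      ∀ α : (Order.succ lam).ord.ToType,
        ∃ f : (Order.succ lam).ord.ToType → lam.ord.ToType,
          ∀ β γ, β < α → γ < α → β ≠ γ →
            Disjoint {x ∈ A β | f β ≤ x} {x ∈ A γ | f γ ≤ x} := by
  classical
  set L := lam.ord.ToType with hL
  set K := (Order.succ lam).ord.ToType with hK
  have hLne : Nonempty L := by
    rw [hL, Ordinal.toType_nonempty_iff_ne_zero, ne_eq, Cardinal.ord_eq_zero]
    exact hreg.pos.ne'
  -- pairing
  obtain ⟨q⟩ : Nonempty (L × L ≃ L) := by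
    rw [← Cardinal.eq, Cardinal.mk_prod, Cardinal.lift_id,
      mk_toType_eq, Cardinal.mul_eq_self hreg.aleph0_le]
  -- the family
  set A : K → Set L := fun β => Set.range (fun ξ => q (ξ, F hreg β ξ)) with hA
  have hAinj : ∀ β : K, Function.Injective (fun ξ => q (ξ, F hreg β ξ)) := by
    intro β ξ ξ' h
    have := q.injective h
    exact (Prod.ext_iff.1 this).1
  have hAmk : ∀ β : K, #(A β) = lam := by
    intro β
    rw [hA]
    rw [Cardinal.mk_range_eq _ (hAinj β), mk_toType_eq]
  have hAint : ∀ β γ : K, β ≠ γ → #(A β ∩ A γ : Set L) < lam := by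
    intro β γ hne
    have hsub : (A β ∩ A γ : Set L)
        ⊆ (fun ξ => q (ξ, F hreg β ξ)) '' {ξ | F hreg β ξ = F hreg γ ξ} := by
      rintro x ⟨⟨ξ, rfl⟩, ⟨ξ', hx'⟩⟩
      have hp := q.injective hx'.symm
      have h1 : ξ = ξ' := (Prod.ext_iff.1 hp).1
      have h2 : F hreg β ξ = F hreg γ ξ := by
        have h3 := (Prod.ext_iff.1 hp).2
        rw [← h1] at h3
        exact h3
      exact ⟨ξ, h2, rfl⟩
    exact (Cardinal.mk_le_mk_of_subset hsub).trans_lt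
      (Cardinal.mk_image_le.trans_lt (F_ad' hreg hne))
  refine ⟨A, fun β => cofinal_of_mk (A β) (hAmk β), ?_⟩
  intro α
  -- injection from Iio α into L
  have hcard : #(Iio α) ≤ #L := by
    rw [hL, mk_toType_eq]
    have := Cardinal.mk_Iio_ord_toType α
    rwa [Order.lt_succ_iff] at this
  obtain ⟨e⟩ : Nonempty (Iio α ↪ L) := Cardinal.le_def _ _ |>.1 hcard
  set T : ∀ β : K, β < α → Set L := fun β h =>
    ⋃ c : {c : Iio α // e c < e ⟨β, h⟩}, (A β ∩ A c.1.1) with hT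
  have hTcard : ∀ β (h : β < α), #(T β h) < lam := by
    intro β h
    have hι : #{c : Iio α // e c < e ⟨β, h⟩} < lam := by
      have : #{c : Iio α // e c < e ⟨β, h⟩} ≤ #(Iio (e ⟨β, h⟩)) :=
        Cardinal.mk_le_of_injective (f := fun p => (⟨e p.1, p.2⟩ : Iio (e ⟨β, h⟩)))
          (by rintro ⟨a, ha⟩ ⟨b, hb⟩ hab
              simp only [Subtype.mk.injEq] at hab
              exact Subtype.ext (e.injective (congrArg Subtype.val hab)))
      exact this.trans_lt (Cardinal.mk_Iio_ord_toType _)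
    rw [hT]
    rw [Cardinal.card_iUnion_lt_iff_forall_of_isRegular hreg hι]
    intro c
    refine hAint β c.1.1 ?_
    intro hc
    have : (c.1 : K) ≠ (β : K) := by
      intro hcc
      have : c.1 = ⟨β, h⟩ := Subtype.ext hcc
      rw [this] at hc
      exact absurd (c.2) (by rw [this]; exact lt_irrefl _)
    exact this hc.symm
  have hbound : ∀ β (h : β < α), ∃ b : L, ∀ x ∈ T β h, x < b := by
    intro β h
    exact small_bounded hreg (T β h) (hTcard β h)
  choose b hb using hbound
  refine ⟨fun β => if h : β < α then b β h else Classical.arbitrary L, ?_⟩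
  intro β γ hβ hγ hne
  rw [Set.disjoint_left]
  rintro x ⟨hxβ, hfβ⟩ ⟨hxγ, hfγ⟩
  rw [show (fun β => if h : β < α then b β h else Classical.arbitrary L) β = b β hβ
    from dif_pos hβ] at hfβ
  rw [show (fun β => if h : β < α then b β h else Classical.arbitrary L) γ = b γ hγ
    from dif_pos hγ] at hfγ
  have hee : e ⟨β, hβ⟩ ≠ e ⟨γ, hγ⟩ := fun h =>
    hne (congrArg Subtype.val (e.injective h))
  rcases lt_or_gt_of_ne hee with hlt | hlt
  · -- e β < e γ : x ∈ T γ hγ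
    have hxT : x ∈ T γ hγ :=
      Set.mem_iUnion.2 ⟨⟨⟨β, hβ⟩, hlt⟩, hxγ, hxβ⟩
    exact absurd (hb γ hγ x hxT) (not_lt.2 hfγ)
  · have hxT : x ∈ T β hβ :=
      Set.mem_iUnion.2 ⟨⟨⟨γ, hγ⟩, hlt⟩, hxβ, hxγ⟩
    exact absurd (hb β hβ x hxT) (not_lt.2 hfβ)

end
end

section
/- Suppose λ is an infinite cardinal for which ADS_λ holds, witnessed by ⟨A_β : β < λ⁺⟩ and functions f_α, and let ⟨λ_η : η < cf(λ)⟩ be a strictly increasing sequence of ordinals converging to λ. Define d : cf(λ) × λ⁺ → λ by d(η,β) := min(A_β \ λ_η). Then for every limit ordinal α < λ⁺ with cf(α) ≠ cf(λ) and every cofinal B ⊆ α, there exist η < cf(λ) and a cofinal B' ⊆ B on which β ↦ d(η,β) is injective. -/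
open Cardinal Set

noncomputable section

/-- The ordinal rank of an element of `o.ToType`. -/
def toOrd {o : Ordinal.{0}} (x : o.ToType) : Ordinal :=
  @Ordinal.typein o.ToType (· < ·) isWellOrder_lt x


theorem toOrd_le_toOrd {o : Ordinal.{0}} {x y : o.ToType} : toOrd x ≤ toOrd y ↔ x ≤ y := by
  unfold toOrd; exact Ordinal.typein_le_typein' o

theorem toOrd_lt_toOrd {o : Ordinal.{0}} {x y : o.ToType} : toOrd x < toOrd y ↔ x < y := by
  unfold toOrd; exact @Ordinal.typein_lt_typein o.ToType (· < ·) isWellOrder_lt _ _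

theorem toOrd_lt {o : Ordinal.{0}} (x : o.ToType) : toOrd x < o := by
  unfold toOrd
  have := @Ordinal.typein_lt_type o.ToType (· < ·) isWellOrder_lt x
  rwa [Ordinal.type_toType] at this

theorem toOrd_surj {o : Ordinal.{0}} {a : Ordinal} (h : a < o) : ∃ x : o.ToType, toOrd x = a := by
  have := @Ordinal.typein_surj o.ToType (· < ·) isWellOrder_lt a (by rwa [Ordinal.type_toType])
  obtain ⟨x, hx⟩ := this
  exact ⟨x, hx⟩

/-- Suppose `ADS_λ` holds, witnessed by `⟨A_β | β < λ⁺⟩` and functions `f_α`, let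
`⟨λ_η | η < cf(λ)⟩` be strictly increasing converging to `λ`, and let
`d(η,β) := min (A_β \ λ_η)`.  Then for every limit `α < λ⁺` with `cf(α) ≠ cf(λ)` and every
cofinal `B ⊆ α`, there are `η < cf(λ)` and a cofinal `B' ⊆ B` on which `β ↦ d(η,β)` is
injective. -/
theorem ads_injective_min (lam : Cardinal) (hlam : ℵ₀ ≤ lam)
    (A : (Order.succ lam).ord.ToType → Set lam.ord.ToType)
    (hA : ∀ β, ∀ x, ∃ y ∈ A β, x ≤ y)
    (f : (Order.succ lam).ord.ToType → (Order.succ lam).ord.ToType → lam.ord.ToType)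
    (hf : ∀ α β γ, β < α → γ < α → β ≠ γ →
      Disjoint {x ∈ A β | f α β ≤ x} {x ∈ A γ | f α γ ≤ x})
    (c : lam.ord.cof.ord.ToType → lam.ord.ToType)
    (hc : StrictMono c) (hcCof : ∀ x, ∃ η, x ≤ c η)
    (d : lam.ord.cof.ord.ToType → (Order.succ lam).ord.ToType → lam.ord.ToType)
    (hd : ∀ η β, d η β ∈ A β ∧ c η ≤ d η β ∧ ∀ x ∈ A β, c η ≤ x → d η β ≤ x) :
    ∀ α : (Order.succ lam).ord.ToType,
      Order.IsSuccLimit (toOrd α) → (toOrd α).cof ≠ lam.ord.cof →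
      ∀ B : Set (Order.succ lam).ord.ToType, (∀ b ∈ B, b < α) →
        (∀ x, x < α → ∃ b ∈ B, x ≤ b) →
        ∃ η, ∃ B' ⊆ B, (∀ x, x < α → ∃ b ∈ B', x ≤ b) ∧
          Set.InjOn (fun β => d η β) B' := by
  intro α hαlim hαcof B hBlt hBcof
  have key : ∃ η, ∀ x, x < α → ∃ b ∈ B, x ≤ b ∧ f α b ≤ c η := by
    rcases hαcof.lt_or_gt with h | h
    · -- cf α < cf λ
      obtain ⟨ι, g, hg, hgcard⟩ := Ordinal.exists_lsub_cof (toOrd α)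
      have hgi : ∀ i, g i < toOrd α := fun i => hg ▸ Ordinal.lt_lsub g i
      have hy' : ∀ i, ∃ y : (Order.succ lam).ord.ToType, toOrd y = g i :=
        fun i => toOrd_surj ((hgi i).trans (toOrd_lt α))
      choose y hy using hy'
      have hylt : ∀ i, y i < α := fun i => toOrd_lt_toOrd.1 (by rw [hy]; exact hgi i)
      choose b hbB hyb using fun i => hBcof (y i) (hylt i)
      choose η hη using fun i => hcCof (f α (b i))
      have hsup : (⨆ i, toOrd (η i)) < lam.ord.cof.ord := by
        apply Ordinal.iSup_lt_ord
        · rw [hgcard, Ordinal.cof_cof]; exact h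
        · intro i; exact toOrd_lt _
      obtain ⟨η₀, hη₀⟩ := toOrd_surj hsup
      refine ⟨η₀, fun x hx => ?_⟩
      have hxg : toOrd x < Ordinal.lsub g := by rw [hg]; exact toOrd_lt_toOrd.2 hx
      obtain ⟨i, hi⟩ := Ordinal.lt_lsub_iff.1 hxg
      have hxy : x ≤ y i := toOrd_le_toOrd.1 (by rw [hy]; exact hi)
      have hηi : η i ≤ η₀ := toOrd_le_toOrd.1 (by rw [hη₀]; exact Ordinal.le_iSup _ i)
      exact ⟨b i, hbB i, hxy.trans (hyb i), (hη i).trans (hc.monotone hηi)⟩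
    · -- cf λ < cf α
      by_contra hcon
      push_neg at hcon
      choose x hxlt hx using hcon
      have hsup : (⨆ η, toOrd (x η)) < toOrd α := by
        apply Ordinal.iSup_lt_ord
        · rw [Cardinal.mk_toType, Cardinal.card_ord]; exact h
        · intro η; exact toOrd_lt_toOrd.2 (hxlt η)
      obtain ⟨z, hz⟩ := toOrd_surj (hsup.trans (toOrd_lt α))
      have hzlt : z < α := toOrd_lt_toOrd.1 (by rw [hz]; exact hsup)
      obtain ⟨b, hbB, hzb⟩ := hBcof z hzlt
      obtain ⟨η₀, hbη⟩ := hcCof (f α b)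
      have hxb : x η₀ ≤ b := by
        have h1 : toOrd (x η₀) ≤ toOrd z := by rw [hz]; exact Ordinal.le_iSup _ η₀
        exact (toOrd_le_toOrd.1 h1).trans hzb
      exact (hx η₀ b hbB hxb).not_ge hbη
  obtain ⟨η, hη⟩ := key
  refine ⟨η, {β ∈ B | f α β ≤ c η}, fun β hβ => hβ.1, fun x hx => ?_, ?_⟩
  · obtain ⟨b, hbB, hxb, hbη⟩ := hη x hx
    exact ⟨b, ⟨hbB, hbη⟩, hxb⟩
  · intro β hβ γ hγ hEq
    by_contra hne
    have hEq' : d η β = d η γ := hEq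
    have hdβ : d η β ∈ {x ∈ A β | f α β ≤ x} :=
      ⟨(hd η β).1, le_trans hβ.2 (hd η β).2.1⟩
    have hdγ : d η γ ∈ {x ∈ A γ | f α γ ≤ x} :=
      ⟨(hd η γ).1, le_trans hγ.2 (hd η γ).2.1⟩
    rw [← hEq'] at hdγ
    exact Set.disjoint_left.1 (hf α β γ (hBlt β hβ.1) (hBlt γ hγ.1) hne) hdβ hdγ

end
end

section
/- The least size of a family ℋ of finite-set-valued functions h : ω → [ω]^{<ω} such that for every infinite X ⊆ ω and every g : X → ω there is h ∈ ℋ with {ξ ∈ X : g(ξ) ∈ h(ξ)} infinite, equals the bounding number 𝔟. -/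
open Cardinal Set

/-- The least size of a family `ℋ` of finite-set-valued functions `h : ω → [ω]^{<ω}`
such that for every infinite `X ⊆ ω` and every `g : X → ω` there is `h ∈ ℋ` with
`{ξ ∈ X | g ξ ∈ h ξ}` infinite, equals the bounding number `𝔟`. -/
theorem meetNum_omega_eq_bounding :
    sInf { c : Cardinal | ∃ H : Set (ℕ → Finset ℕ), #H = c ∧
        ∀ X : Set ℕ, X.Infinite → ∀ g : ℕ → ℕ,
          ∃ h ∈ H, {ξ ∈ X | g ξ ∈ h ξ}.Infinite } =
    sInf { c : Cardinal | ∃ F : Set (ℕ → ℕ), #F = c ∧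
        ∀ g : ℕ → ℕ, ∃ f ∈ F, {n | ¬ f n ≤ g n}.Infinite } := by
  set A := { c : Cardinal | ∃ H : Set (ℕ → Finset ℕ), #H = c ∧
        ∀ X : Set ℕ, X.Infinite → ∀ g : ℕ → ℕ,
          ∃ h ∈ H, {ξ ∈ X | g ξ ∈ h ξ}.Infinite } with hA
  set B := { c : Cardinal | ∃ F : Set (ℕ → ℕ), #F = c ∧
        ∀ g : ℕ → ℕ, ∃ f ∈ F, {n | ¬ f n ≤ g n}.Infinite } with hB
  have hAne : A.Nonempty := by
    refine ⟨#(Set.univ : Set (ℕ → Finset ℕ)), Set.univ, rfl, ?_⟩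
    intro X hX g
    refine ⟨fun n => {g n}, Set.mem_univ _, hX.mono ?_⟩
    intro ξ hξ
    exact ⟨hξ, Finset.mem_singleton_self _⟩
  have hBne : B.Nonempty := by
    refine ⟨#(Set.univ : Set (ℕ → ℕ)), Set.univ, rfl, ?_⟩
    intro g
    refine ⟨fun n => g n + 1, Set.mem_univ _, ?_⟩
    have : {n : ℕ | ¬ g n + 1 ≤ g n} = Set.univ := by
      ext n; simp [Nat.lt_irrefl]
    rw [this]
    exact Set.infinite_univ
  have key : ∀ S T : Set Cardinal, S.Nonempty → (∀ c ∈ S, ∃ d ∈ T, d ≤ c) →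
      sInf T ≤ sInf S := by
    intro S T hS h
    obtain ⟨d, hd, hdc⟩ := h _ (csInf_mem hS)
    exact (csInf_le (OrderBot.bddBelow T) hd).trans hdc
  apply le_antisymm
  · -- from an unbounded family F, build a meeting family H
    apply key B A hBne
    rintro c ⟨F, rfl, hF⟩
    set H : Set (ℕ → Finset ℕ) :=
      (fun f n => Finset.range ((Finset.range (n+1)).sup f + 1)) '' F with hHdef
    refine ⟨#H, ⟨H, rfl, ?_⟩, Cardinal.mk_image_le⟩
    intro X hX g
    -- choose for each n an element of X above n
    have hch : ∀ n : ℕ, ∃ m, m ∈ X ∧ n < m := fun n => hX.exists_gt n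
    choose μ hμX hμlt using hch
    by_contra hcon
    push_neg at hcon
    obtain ⟨f, hfF, hfT⟩ := hF (fun n => g (μ n))
    set h : ℕ → Finset ℕ := fun n => Finset.range ((Finset.range (n+1)).sup f + 1) with hh
    have hhH : h ∈ H := ⟨f, hfF, rfl⟩
    have hE : {ξ ∈ X | g ξ ∈ h ξ}.Finite := hcon h hhH
    obtain ⟨N, hN⟩ := hE.bddAbove
    obtain ⟨n, hnT, hnN⟩ := hfT.exists_gt N
    -- n ∈ {n | ¬ f n ≤ g (μ n)}, n > N
    have hμ : μ n ∈ X := hμX n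
    have hgm : g (μ n) < f n := Nat.lt_of_not_le hnT
    have hmem : g (μ n) ∈ h (μ n) := by
      rw [hh]
      simp only [Finset.mem_range]
      have hfle : f n ≤ (Finset.range (μ n + 1)).sup f :=
        Finset.le_sup (Finset.mem_range.mpr (Nat.lt_succ_of_lt (hμlt n)))
      omega
    have : μ n ≤ N := hN ⟨hμ, hmem⟩
    have := hμlt n
    omega
  · -- from a meeting family H, build an unbounded family F
    apply key A B hAne
    rintro c ⟨H, rfl, hH⟩
    set F : Set (ℕ → ℕ) := (fun h n => (h n).sup id + 1) '' H with hFdef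
    refine ⟨#F, ⟨F, rfl, ?_⟩, Cardinal.mk_image_le⟩
    intro g
    obtain ⟨h, hhH, hS⟩ := hH Set.univ Set.infinite_univ g
    refine ⟨fun n => (h n).sup id + 1, ⟨h, hhH, rfl⟩, hS.mono ?_⟩
    rintro ξ ⟨-, hξ⟩
    have : g ξ ≤ (h ξ).sup id := Finset.le_sup (f := id) hξ
    simp only [Set.mem_setOf_eq]
    omega
end
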